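/- arXiv:1901.07097 — 10 statements merged into one kernel-verified Lean document; each statement's English description precedes it below -/
import Mathlib

section
/- For every n ≥ 3, the Ramsey number R(P_n^t, F) of the 3-uniform tight path on n vertices versus the Fano plane satisfies R(P_n^t, F) ≥ 2n - 1. That is, there exists a red-blue coloring of the edges of the complete 3-uniform hypergraph on 2n-2 vertices containing no red tight path on n vertices and no blue copy of the Fano plane. -/
open Finset

def fanoLines : Finset (Finset (Fin 7)) :=
  {({0,1,2} : Finset (Fin 7)), {0,3,4}, {0,5,6}, {1,3,5}, {1,4,6}, {2,3,6}, {2,4,5}}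

/-- The coloring contains a blue copy of the Fano plane. -/
def HasBlueFano {α : Type*} [DecidableEq α] (blue : Finset α → Prop) : Prop :=
  ∃ f : Fin 7 → α, Function.Injective f ∧ ∀ L ∈ fanoLines, blue (L.image f)

/-- The coloring contains a red copy of the tight path on `n` vertices. -/
def HasRedTightPath {α : Type*} [DecidableEq α] (red : Finset α → Prop) (n : ℕ) : Prop :=
  ∃ f : ℕ → α, (∀ i < n, ∀ j < n, f i = f j → i = j) ∧
    ∀ i, i + 2 < n → red ({f i, f (i + 1), f (i + 2)} : Finset α)

set_option maxRecDepth 20000 in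
/-- The Fano plane is not 2-colorable: every 2-coloring of its points has a
monochromatic line. -/
lemma fano_not_two_colorable (c : Fin 7 → Bool) :
    ∃ L ∈ fanoLines, ∀ x ∈ L, ∀ y ∈ L, c x = c y := by
  revert c; decide

/-- For every `n ≥ 3` there is a red-blue coloring of the triples of a `2n-2` element
vertex set with no red tight path on `n` vertices and no blue Fano plane, i.e.
`R(P_n^t, F) ≥ 2n - 1`. -/
theorem tightPath_fano_lower_bound (n : ℕ) (hn : 3 ≤ n) :
    ∃ red : Finset (Fin (2 * n - 2)) → Prop,
      ¬ HasRedTightPath red n ∧ ¬ HasBlueFano (fun e => ¬ red e) := by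
  -- side of a vertex: `true` if its value is `< n - 1`
  set s : Fin (2 * n - 2) → Bool := fun x => decide (x.val < n - 1) with hs
  refine ⟨fun e => ∀ x ∈ e, ∀ y ∈ e, s x = s y, ?_, ?_⟩
  · rintro ⟨f, hinj, hred⟩
    -- adjacent vertices of the tight path have the same side
    have hadj : ∀ i, i + 1 < n → s (f i) = s (f (i + 1)) := by
      intro i hi
      by_cases h2 : i + 2 < n
      · exact hred i h2 (f i) (by simp) (f (i + 1)) (by simp)
      · obtain ⟨j, rfl⟩ : ∃ j, i = j + 1 := ⟨i - 1, by omega⟩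
        exact hred j (by omega) (f (j + 1)) (by simp) (f (j + 2)) (by simp)
    have hsame : ∀ i < n, s (f i) = s (f 0) := by
      intro i
      induction i with
      | zero => intro _; rfl
      | succ i ih => intro h; rw [← hadj i h]; exact ih (by omega)
    -- the `n` vertices of the path all lie on one side, of size `n - 1`
    have hk : n - 1 < 2 * n - 2 := by omega
    have hcard : (univ.filter fun x : Fin (2 * n - 2) => s x = s (f 0)).card = n - 1 := by
      cases hb : s (f 0)
      · have : (univ.filter fun x : Fin (2 * n - 2) => s x = false) =
            Ici (⟨n - 1, hk⟩ : Fin (2 * n - 2)) := by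
          ext x
          simp only [Finset.mem_filter, Finset.mem_univ, true_and, hs,
            decide_eq_false_iff_not, Nat.not_lt, Finset.mem_Ici, Fin.le_def]
        rw [this, Fin.card_Ici]
        simp only [Fin.val_mk]
        omega
      · have : (univ.filter fun x : Fin (2 * n - 2) => s x = true) =
            Iio (⟨n - 1, hk⟩ : Fin (2 * n - 2)) := by
          ext x
          simp only [Finset.mem_filter, Finset.mem_univ, true_and, hs,
            decide_eq_true_eq, Finset.mem_Iio, Fin.lt_def]
        rw [this, Fin.card_Iio]
    have hsub : (Finset.range n).image f ⊆
        (univ.filter fun x : Fin (2 * n - 2) => s x = s (f 0)) := by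
      intro x hx
      obtain ⟨i, hi, rfl⟩ := Finset.mem_image.1 hx
      simp only [Finset.mem_filter, Finset.mem_univ, true_and]
      exact hsame i (Finset.mem_range.1 hi)
    have himg : ((Finset.range n).image f).card = n := by
      rw [Finset.card_image_of_injOn, Finset.card_range]
      intro i hi j hj hij
      exact hinj i (Finset.mem_range.1 hi) j (Finset.mem_range.1 hj) hij
    have := Finset.card_le_card hsub
    rw [himg, hcard] at this
    omega
  · rintro ⟨f, hinj, hblue⟩
    obtain ⟨L, hL, hmono⟩ := fano_not_two_colorable (fun x => s (f x))
    refine hblue L hL ?_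
    intro a ha b hb
    obtain ⟨x, hx, rfl⟩ := Finset.mem_image.1 ha
    obtain ⟨y, hy, rfl⟩ := Finset.mem_image.1 hb
    exact hmono x hx y hy
end

section
/- Partition the vertex set of the complete 3-uniform hypergraph K_{2n-2}^{(3)} into sets A and B with |A| = |B| = n-1. Color a triple red if it is fully contained in A or fully contained in B, and blue otherwise. Then this coloring contains no blue copy of the Fano plane. -/
open Finset

lemma fano_mono (c : Fin 7 → Bool) :
    ∃ L ∈ fanoLines, (∀ i ∈ L, c i = true) ∨ (∀ i ∈ L, c i = false) := by
  revert c; set_option maxRecDepth 4000 in decide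

/-- Partition the vertices into `A` and `B` with `|A| = |B| = n-1`; color a triple red
iff it lies entirely in `A` or entirely in `B`, blue otherwise. Then there is no blue
copy of the Fano plane inside `A ∪ B`. -/
theorem no_blue_fano_two_cliques {α : Type*} [DecidableEq α] (n : ℕ) (A B : Finset α)
    (hA : A.card = n - 1) (hB : B.card = n - 1) (hAB : Disjoint A B) :
    ¬ ∃ f : Fin 7 → α, Function.Injective f ∧ (∀ i, f i ∈ A ∪ B) ∧
      ∀ L ∈ fanoLines, ¬ (L.image f ⊆ A ∨ L.image f ⊆ B) := by
  rintro ⟨f, -, hf, hblue⟩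
  obtain ⟨L, hL, hmono⟩ := fano_mono (fun i => decide (f i ∈ A))
  refine hblue L hL ?_
  rcases hmono with h | h
  · left
    intro x hx
    obtain ⟨i, hi, rfl⟩ := mem_image.1 hx
    simpa using h i hi
  · right
    intro x hx
    obtain ⟨i, hi, rfl⟩ := mem_image.1 hx
    have hnA : f i ∉ A := by simpa using h i hi
    rcases mem_union.1 (hf i) with h' | h'
    · exact absurd h' hnA
    · exact h'
end

section
/- Let A be a set of m vertices and B a set of m vertices in a red-blue colored complete 3-uniform hypergraph, disjoint from each other. If there is no red triple triangle between A and B, then the total number of red triples with exactly one vertex in one set and two in the other is at most 20m^2. -/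
open Finset


lemma link_bound {α : Type*} [DecidableEq α] (A : Finset α) (E : Finset (Finset α))
    (hE : E ⊆ A.powersetCard 2)
    (hP : ¬ ∃ w x y z : α, [w, x, y, z].Nodup ∧
      ({w, x} : Finset α) ∈ E ∧ ({x, y} : Finset α) ∈ E ∧ ({y, z} : Finset α) ∈ E) :
    E.card ≤ 2 * A.card := by
  classical
  set N : α → Finset α := fun a => A.filter (fun u => ({a, u} : Finset α) ∈ E) with hN
  have hEm : ∀ e ∈ E, e ⊆ A ∧ e.card = 2 := by
    intro e he
    have := hE he
    rw [mem_powersetCard] at this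
    exact this
  have hNself : ∀ a, a ∉ N a := by
    intro a ha
    rw [hN, mem_filter] at ha
    have := (hEm _ ha.2).2
    simp at this
  have key : ∀ x y : α, ({x, y} : Finset α) ∈ E → (N x).card ≤ 2 ∨ (N y).card ≤ 2 := by
    intro x y hxy
    by_contra hc
    push_neg at hc
    obtain ⟨hx3, hy3⟩ := hc
    have hsub := (hEm _ hxy).1
    have hxA : x ∈ A := hsub (by simp)
    have hyA : y ∈ A := hsub (by simp)
    have hxney : x ≠ y := by
      rintro rfl
      have := (hEm _ hxy).2
      simp at this
    -- pick w ∈ N x, w ≠ y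
    have hwex : ((N x).erase y).Nonempty := by
      rw [← card_pos]
      by_cases hy : y ∈ N x
      · rw [card_erase_of_mem hy]; omega
      · rw [erase_eq_of_notMem hy]; omega
    obtain ⟨w, hw⟩ := hwex
    have hwy : w ≠ y := ne_of_mem_erase hw
    have hwNx : w ∈ N x := mem_of_mem_erase hw
    have hwx : w ≠ x := fun h => hNself x (h ▸ hwNx)
    -- pick z ∈ N y, z ∉ {x, w}
    have hzex : ((N y) \ {x, w}).Nonempty := by
      rw [← card_pos]
      by_contra hz
      push_neg at hz
      have hsub2 : N y ⊆ {x, w} := by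
        rw [← sdiff_eq_empty_iff_subset, ← card_eq_zero]
        omega
      have h1 := card_le_card hsub2
      have h2 : ({x, w} : Finset α).card ≤ 2 := card_le_two
      omega
    obtain ⟨z, hz⟩ := hzex
    rw [mem_sdiff, mem_insert, mem_singleton] at hz
    push_neg at hz
    obtain ⟨hzNy, hzx, hzw⟩ := hz
    have hzy : z ≠ y := fun h => hNself y (h ▸ hzNy)
    apply hP
    refine ⟨w, x, y, z, ?_, ?_, hxy, ?_⟩
    · simp [hwx, hwy, hxney, hzw.symm, hzx.symm, hzy.symm]
    · rw [pair_comm]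
      exact (mem_filter.mp hwNx).2
    · exact (mem_filter.mp hzNy).2
  -- E is covered by edges at low-degree vertices
  have hcov : E ⊆ (A.filter (fun a => (N a).card ≤ 2)).biUnion
      (fun a => (N a).image (fun u => ({a, u} : Finset α))) := by
    intro e he
    obtain ⟨hsub, hcard⟩ := hEm e he
    obtain ⟨x, y, hxy, rfl⟩ := card_eq_two.mp hcard
    have hxA : x ∈ A := hsub (by simp)
    have hyA : y ∈ A := hsub (by simp)
    have hyNx : y ∈ N x := mem_filter.mpr ⟨hyA, he⟩
    have hxNy : x ∈ N y := mem_filter.mpr ⟨hxA, by rwa [pair_comm]⟩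
    rcases key x y he with hk | hk
    · exact mem_biUnion.mpr ⟨x, mem_filter.mpr ⟨hxA, hk⟩, mem_image.mpr ⟨y, hyNx, rfl⟩⟩
    · exact mem_biUnion.mpr ⟨y, mem_filter.mpr ⟨hyA, hk⟩, mem_image.mpr ⟨x, hxNy, pair_comm y x ▸ rfl⟩⟩
  calc E.card ≤ _ := card_le_card hcov
    _ ≤ ∑ a ∈ A.filter (fun a => (N a).card ≤ 2),
          ((N a).image (fun u => ({a, u} : Finset α))).card := card_biUnion_le
    _ ≤ ∑ a ∈ A.filter (fun a => (N a).card ≤ 2), 2 := by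
        apply sum_le_sum
        intro a ha
        exact le_trans card_image_le (mem_filter.mp ha).2
    _ = 2 * (A.filter (fun a => (N a).card ≤ 2)).card := by rw [sum_const, smul_eq_mul, mul_comm]
    _ ≤ 2 * A.card := by
        have := card_filter_le A (fun a => (N a).card ≤ 2)
        omega

lemma per_vertex_bound {α : Type*} [DecidableEq α]
    (red : Finset α → Prop) [DecidablePred red] (A : Finset α) (v : α)
    (hP : ¬ ∃ w x y z : α, [w, x, y, z].Nodup ∧ ({w, x, y, z} : Finset α) ⊆ A ∧
        red {w, x, v} ∧ red {x, y, v} ∧ red {y, z, v}) :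
    ((A.powersetCard 2).filter fun p => red (insert v p)).card ≤ 2 * A.card := by
  classical
  apply link_bound A _ (filter_subset _ _)
  rintro ⟨w, x, y, z, hnd, h1, h2, h3⟩
  have hins : ∀ a b : α, ({a, b, v} : Finset α) = insert v ({a, b} : Finset α) := by
    intro a b; ext t; simp; tauto
  rw [mem_filter, mem_powersetCard] at h1 h2 h3
  apply hP
  refine ⟨w, x, y, z, hnd, ?_, ?_, ?_, ?_⟩
  · intro t ht
    simp only [mem_insert, mem_singleton] at ht
    rcases ht with rfl | rfl | rfl | rfl
    · exact h1.1.1 (by simp)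
    · exact h1.1.1 (by simp)
    · exact h2.1.1 (by simp)
    · exact h3.1.1 (by simp)
  · rw [hins]; exact h1.2
  · rw [hins]; exact h2.2
  · rw [hins]; exact h3.2


/-- If there is no red triple triangle between disjoint `m`-sets `A` and `B`, then the number
of red triples with exactly one vertex in one of the sets and two in the other is at most
`20 m²`. -/
theorem no_triple_triangle_few_red {α : Type*} [DecidableEq α]
    (red : Finset α → Prop) [DecidablePred red] (m : ℕ) (A B : Finset α)
    (hA : A.card = m) (hB : B.card = m) (hAB : Disjoint A B)
    (h : ¬ ∃ v w x y z : α, [w, x, y, z].Nodup ∧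
        ((v ∈ B ∧ ({w, x, y, z} : Finset α) ⊆ A) ∨ (v ∈ A ∧ ({w, x, y, z} : Finset α) ⊆ B)) ∧
        red {w, x, v} ∧ red {x, y, v} ∧ red {y, z, v}) :
    (((A ∪ B).powersetCard 3).filter fun e => red e ∧ ¬ e ⊆ A ∧ ¬ e ⊆ B).card ≤ 20 * m ^ 2 := by
  classical
  set SB : Finset (Finset α) := B.biUnion (fun v =>
    ((A.powersetCard 2).filter fun p => red (insert v p)).image (insert v)) with hSB
  set SA : Finset (Finset α) := A.biUnion (fun v =>
    ((B.powersetCard 2).filter fun p => red (insert v p)).image (insert v)) with hSA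
  have hcov : (((A ∪ B).powersetCard 3).filter fun e => red e ∧ ¬ e ⊆ A ∧ ¬ e ⊆ B) ⊆ SB ∪ SA := by
    intro e he
    rw [mem_filter, mem_powersetCard] at he
    obtain ⟨⟨hsub, hc3⟩, hred, hnA, hnB⟩ := he
    have hdisj : Disjoint (e ∩ A) (e ∩ B) := hAB.mono inter_subset_right inter_subset_right
    have hunion : (e ∩ A) ∪ (e ∩ B) = e := by
      rw [← inter_union_distrib_left]
      exact inter_eq_left.mpr hsub
    have hcards : (e ∩ A).card + (e ∩ B).card = 3 := by
      rw [← card_union_of_disjoint hdisj, hunion, hc3]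
    have hApos : 0 < (e ∩ A).card := by
      rw [card_pos]
      obtain ⟨x, hxe, hxB⟩ := not_subset.mp hnB
      have : x ∈ A := by
        rcases mem_union.mp (hsub hxe) with hx | hx
        · exact hx
        · exact absurd hx hxB
      exact ⟨x, mem_inter.mpr ⟨hxe, this⟩⟩
    have hBpos : 0 < (e ∩ B).card := by
      rw [card_pos]
      obtain ⟨x, hxe, hxA⟩ := not_subset.mp hnA
      have : x ∈ B := by
        rcases mem_union.mp (hsub hxe) with hx | hx
        · exact absurd hx hxA
        · exact hx
      exact ⟨x, mem_inter.mpr ⟨hxe, this⟩⟩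
    rw [mem_union]
    rcases (by omega : (e ∩ B).card = 1 ∨ (e ∩ A).card = 1) with h1 | h1
    · left
      obtain ⟨v, hv⟩ := card_eq_one.mp h1
      have hvB : v ∈ B := by
        have : v ∈ e ∩ B := hv ▸ mem_singleton_self v
        exact (mem_inter.mp this).2
      have heq : e = insert v (e ∩ A) := by
        rw [insert_eq, ← hv, union_comm, hunion]
      refine mem_biUnion.mpr ⟨v, hvB, mem_image.mpr ⟨e ∩ A, ?_, heq.symm⟩⟩
      rw [mem_filter, mem_powersetCard]
      exact ⟨⟨inter_subset_right, by omega⟩, heq ▸ hred⟩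
    · right
      obtain ⟨v, hv⟩ := card_eq_one.mp h1
      have hvA : v ∈ A := by
        have : v ∈ e ∩ A := hv ▸ mem_singleton_self v
        exact (mem_inter.mp this).2
      have heq : e = insert v (e ∩ B) := by
        rw [insert_eq, ← hv, hunion]
      refine mem_biUnion.mpr ⟨v, hvA, mem_image.mpr ⟨e ∩ B, ?_, heq.symm⟩⟩
      rw [mem_filter, mem_powersetCard]
      exact ⟨⟨inter_subset_right, by omega⟩, heq ▸ hred⟩
  have hSBcard : SB.card ≤ m * (2 * m) := by
    calc SB.card ≤ ∑ v ∈ B, (((A.powersetCard 2).filter fun p => red (insert v p)).image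
          (insert v)).card := card_biUnion_le
      _ ≤ ∑ v ∈ B, (2 * m) := by
          apply sum_le_sum
          intro v hv
          refine le_trans card_image_le ?_
          rw [← hA]
          apply per_vertex_bound red A v
          rintro ⟨w, x, y, z, hnd, hs, h1, h2, h3⟩
          exact h ⟨v, w, x, y, z, hnd, Or.inl ⟨hv, hs⟩, h1, h2, h3⟩
      _ = m * (2 * m) := by rw [sum_const, smul_eq_mul, hB]
  have hSAcard : SA.card ≤ m * (2 * m) := by
    calc SA.card ≤ ∑ v ∈ A, (((B.powersetCard 2).filter fun p => red (insert v p)).image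
          (insert v)).card := card_biUnion_le
      _ ≤ ∑ v ∈ A, (2 * m) := by
          apply sum_le_sum
          intro v hv
          refine le_trans card_image_le ?_
          rw [← hB]
          apply per_vertex_bound red B v
          rintro ⟨w, x, y, z, hnd, hs, h1, h2, h3⟩
          exact h ⟨v, w, x, y, z, hnd, Or.inr ⟨hv, hs⟩, h1, h2, h3⟩
      _ = m * (2 * m) := by rw [sum_const, smul_eq_mul, hA]
  calc _ ≤ (SB ∪ SA).card := card_le_card hcov
    _ ≤ SB.card + SA.card := card_union_le _ _
    _ ≤ m * (2 * m) + m * (2 * m) := by omega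
    _ ≤ 20 * m ^ 2 := by nlinarith
end

section
/- The bipartite Ramsey number of K_{4,4} is at most 48: for every red-blue coloring of the edges of the complete bipartite graph K_{48,48}, there is a monochromatic copy of K_{4,4} with 4 vertices on each side. -/
/-!
Suppose there is no monochromatic `K_{4,4}` and let `N k l` count the monochromatic copies of
`K_{k,l}` with `k` rows and `l` columns. A `4`-set of columns has at most `3` rows of each common
colour, so `N 1 4 ≤ 6 * C(48,4)` and, as `3 * C(x,3) ≤ x` for `x ≤ 3`, `3 * N 3 4 ≤ N 1 4`.
Summing `10 * x ≤ C(x,4) + 45` over the common colour classes of the `3`-sets of rows gives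
`10 * N 3 1 ≤ N 3 4 + 90 * C(48,3)`. The two colour classes at a column have sizes `x + y = 48`,
and summing `383548 + C(x,4) + C(y,4) ≤ 100 * (C(x,3) + C(y,3))` over the columns gives
`48 * 383548 + N 4 1 ≤ 100 * N 3 1`. Together, `3 * N 4 1 + 8531712 ≤ 10 * N 1 4`, and the same
with rows and columns exchanged; this contradicts `N 1 4, N 4 1 ≤ 6 * C(48,4)`.
-/

open Finset Function

theorem three_mul_choose_three_le {x : ℕ} (hx : x ≤ 3) : 3 * x.choose 3 ≤ x := by
  interval_cases x <;> decide

theorem ten_mul_le_choose_four_add {x : ℕ} (hx : x ≤ 48) : 10 * x ≤ x.choose 4 + 45 := by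
  interval_cases x <;> decide

-- `383548` is the least value of the difference, attained at `x = y = 24`.
theorem choose_four_add_choose_four_add_le_of_add_eq_48 {x y : ℕ} (h : x + y = 48) :
    383548 + (x.choose 4 + y.choose 4) ≤ 100 * (x.choose 3 + y.choose 3) := by
  obtain rfl : y = 48 - x := by omega
  have hx : x ≤ 48 := by omega
  interval_cases x <;> decide

section MonoBiclique

variable {α β κ : Type*}

def HasMonoBiclique (c : α → β → κ) (k l : ℕ) : Prop :=
  ∃ (S : Finset α) (T : Finset β) (b : κ),
    #S = k ∧ #T = l ∧ ∀ s ∈ S, ∀ t ∈ T, c s t = b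

theorem hasMonoBiclique_swap {c : α → β → κ} {k l : ℕ} :
    HasMonoBiclique (swap c) l k ↔ HasMonoBiclique c k l :=
  ⟨fun ⟨T, S, b, hT, hS, h⟩ => ⟨S, T, b, hS, hT, fun s hs t ht => h t ht s hs⟩,
    fun ⟨S, T, b, hS, hT, h⟩ => ⟨T, S, b, hT, hS, fun t ht s hs => h s hs t ht⟩⟩

variable [Fintype α] [DecidableEq κ]

def monoRows (c : α → β → κ) (b : κ) (T : Finset β) : Finset α :=
  {s | ∀ t ∈ T, c s t = b}

theorem powersetCard_monoRows (c : α → β → κ) (b : κ) (T : Finset β) (k : ℕ) :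
    (monoRows c b T).powersetCard k =
      {S ∈ powersetCard k (univ : Finset α) | ∀ s ∈ S, ∀ t ∈ T, c s t = b} := by
  ext S
  simp only [monoRows, mem_powersetCard, mem_filter, subset_iff, mem_univ, true_and]
  tauto

theorem sum_choose_card_monoRows_swap [Fintype β] (c : α → β → κ) (b : κ) (k l : ℕ) :
    ∑ S ∈ powersetCard k univ, (#(monoRows (swap c) b S)).choose l =
      ∑ T ∈ powersetCard l univ, (#(monoRows c b T)).choose k := by
  simp_rw [← card_powersetCard, powersetCard_monoRows, card_filter]
  rw [sum_comm]
  exact sum_congr rfl fun T _ => sum_congr rfl fun S _ => if_congr forall₂_comm rfl rfl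

theorem card_monoRows_lt {c : α → β → κ} {k l : ℕ} (hc : ¬HasMonoBiclique c k l)
    {T : Finset β} (hT : #T = l) (b : κ) : #(monoRows c b T) < k := by
  by_contra! h
  obtain ⟨S, hS, rfl⟩ := exists_subset_card_eq h
  exact hc ⟨S, T, b, rfl, hT, fun s hs => (mem_filter.1 (hS hs)).2⟩

theorem sum_card_monoRows_singleton [Fintype κ] (c : α → β → κ) (t : β) :
    ∑ b, #(monoRows c b {t}) = Fintype.card α := by
  simp only [monoRows, mem_singleton, forall_eq]
  exact (card_eq_sum_card_fiberwise fun _ _ => mem_univ _).symm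

variable [Fintype β] [Fintype κ]

/-- The number of monochromatic copies of `K_{k,l}` with `k` vertices in `α` and `l` in `β`. -/
def monoBicliqueCount (c : α → β → κ) (k l : ℕ) : ℕ :=
  ∑ T ∈ powersetCard l univ, ∑ b, (#(monoRows c b T)).choose k

theorem monoBicliqueCount_swap (c : α → β → κ) (k l : ℕ) :
    monoBicliqueCount (swap c) l k = monoBicliqueCount c k l := by
  rw [monoBicliqueCount, monoBicliqueCount, sum_comm, sum_comm (s := powersetCard l univ)]
  exact sum_congr rfl fun b _ => sum_choose_card_monoRows_swap c b k l

theorem monoBicliqueCount_eq_sum_singleton (c : α → β → κ) (k : ℕ) :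
    monoBicliqueCount c k 1 = ∑ t, ∑ b, (#(monoRows c b {t})).choose k := by
  simp [monoBicliqueCount, powersetCard_one]

theorem monoBicliqueCount_one_le {c : α → β → κ} {k l : ℕ}
    (hc : ¬HasMonoBiclique c k l) :
    monoBicliqueCount c 1 l ≤ (Fintype.card β).choose l * (Fintype.card κ * (k - 1)) := by
  calc monoBicliqueCount c 1 l
      ≤ ∑ _T ∈ powersetCard l (univ : Finset β), ∑ _b : κ, (k - 1) :=
        sum_le_sum fun T hT => sum_le_sum fun b _ => by
          have := card_monoRows_lt hc (mem_powersetCard.1 hT).2 b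
          rw [Nat.choose_one_right]
          omega
    _ = _ := by simp

theorem three_mul_monoBicliqueCount_three_le {c : α → β → κ} {l : ℕ}
    (hc : ¬HasMonoBiclique c 4 l) :
    3 * monoBicliqueCount c 3 l ≤ monoBicliqueCount c 1 l := by
  simp only [monoBicliqueCount, mul_sum, Nat.choose_one_right]
  exact sum_le_sum fun T hT => sum_le_sum fun b _ => three_mul_choose_three_le <|
    Nat.le_of_lt_succ (card_monoRows_lt hc (mem_powersetCard.1 hT).2 b)

theorem ten_mul_monoBicliqueCount_one_le (hα : Fintype.card α ≤ 48) (c : α → β → κ)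
    (l : ℕ) :
    10 * monoBicliqueCount c 1 l ≤
      monoBicliqueCount c 4 l + (Fintype.card β).choose l * (Fintype.card κ * 45) := by
  calc 10 * monoBicliqueCount c 1 l
      ≤ ∑ T ∈ powersetCard l (univ : Finset β), ∑ b,
          ((#(monoRows c b T)).choose 4 + 45) := by
        simp only [monoBicliqueCount, mul_sum, Nat.choose_one_right]
        exact sum_le_sum fun T _ => sum_le_sum fun b _ =>
          ten_mul_le_choose_four_add ((card_le_univ _).trans hα)
    _ = _ := by simp [monoBicliqueCount, sum_add_distrib]

theorem add_monoBicliqueCount_four_one_le (c : α → β → Bool) (hα : Fintype.card α = 48) :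
    383548 * Fintype.card β + monoBicliqueCount c 4 1 ≤ 100 * monoBicliqueCount c 3 1 := by
  have hcol (t : β) := choose_four_add_choose_four_add_le_of_add_eq_48 (by
    simpa [Fintype.sum_bool, hα] using sum_card_monoRows_singleton c t)
  simpa [monoBicliqueCount_eq_sum_singleton, sum_add_distrib, mul_sum, mul_add, mul_comm] using
    sum_le_sum fun t (_ : t ∈ univ) => hcol t

theorem three_mul_monoBicliqueCount_four_one_add_le (hα : Fintype.card α = 48)
    (hβ : Fintype.card β = 48) {c : α → β → Bool} (hc : ¬HasMonoBiclique c 4 4) :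
    3 * monoBicliqueCount c 4 1 + 8531712 ≤ 10 * monoBicliqueCount c 1 4 := by
  have hcols := add_monoBicliqueCount_four_one_le c hα
  have hrows := ten_mul_monoBicliqueCount_one_le hβ.le (swap c) 3
  rw [monoBicliqueCount_swap c 3 1, monoBicliqueCount_swap c 3 4] at hrows
  have hcap := three_mul_monoBicliqueCount_three_le hc
  norm_num [hα, hβ, Nat.choose_eq_descFactorial_div_factorial] at hcols hrows
  omega

theorem hasMonoBiclique_four_four (hα : Fintype.card α = 48) (hβ : Fintype.card β = 48)
    (c : α → β → Bool) : HasMonoBiclique c 4 4 := by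
  by_contra hc
  have hc' : ¬HasMonoBiclique (swap c) 4 4 := hasMonoBiclique_swap.not.2 hc
  have h := three_mul_monoBicliqueCount_four_one_add_le hα hβ hc
  have h' := three_mul_monoBicliqueCount_four_one_add_le hβ hα hc'
  have hcap := monoBicliqueCount_one_le hc
  have hcap' := monoBicliqueCount_one_le hc'
  rw [monoBicliqueCount_swap c 1 4, monoBicliqueCount_swap c 4 1] at h'
  rw [monoBicliqueCount_swap c 4 1] at hcap'
  norm_num [hα, hβ, Nat.choose_eq_descFactorial_div_factorial] at hcap hcap'
  omega

end MonoBiclique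

/-- The bipartite Ramsey number of `K_{4,4}` is at most 48: every 2-coloring of the edges of
`K_{48,48}` contains a monochromatic `K_{4,4}` respecting the bipartition. -/
theorem bipartite_ramsey_K44_le_48 (c : Fin 48 → Fin 48 → Bool) :
    ∃ (S T : Finset (Fin 48)) (b : Bool), S.card = 4 ∧ T.card = 4 ∧
      ∀ s ∈ S, ∀ t ∈ T, c s t = b :=
  hasMonoBiclique_four_four (Fintype.card_fin 48) (Fintype.card_fin 48) c
end

section
/- Let G be a graph (on any vertex set) whose complement contains no clique on 4 vertices (K_4), and suppose the vertex set of G cannot be partitioned into two paths. Then the vertex set of G can be partitioned into three (possibly empty) vertex-disjoint paths. -/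
/-!
Take a longest path `P₁` of `G`, then a longest path `P₂` of `G - P₁`, then a longest path `P₃`
of `G - P₁ - P₂`. By maximality, the first vertex of each `Pᵢ` has no neighbour among the vertices
left over when `Pᵢ` was chosen. So if a vertex `v` were missed by all three paths, then `v` and the
three first vertices would span a `K₄` in the complement of `G`.
-/

namespace SimpleGraph

variable {V : Type*} (G : SimpleGraph V)

structure IsPathIn (s : Set V) (l : List V) : Prop where
  isChain : l.IsChain G.Adj
  nodup : l.Nodup
  mem : ∀ x ∈ l, x ∈ s

structure IsLongestPathIn (s : Set V) (l : List V) : Prop extends G.IsPathIn s l where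
  length_le : ∀ m, G.IsPathIn s m → m.length ≤ l.length

theorem exists_isLongestPathIn [Finite V] (s : Set V) : ∃ l, G.IsLongestPathIn s l := by
  cases nonempty_fintype V
  have hfin : {l | G.IsPathIn s l}.Finite :=
    (List.finite_length_le V (Fintype.card V)).subset fun l hl => hl.nodup.length_le_card
  obtain ⟨l, hl, hmax⟩ :=
    Set.exists_max_image _ List.length hfin ⟨[], ⟨by simp, by simp, by simp⟩⟩
  exact ⟨l, hl, hmax⟩

variable {G}

theorem IsLongestPathIn.exists_mem_forall_not_adj {s : Set V} {l : List V}
    (h : G.IsLongestPathIn s l) {v : V} (hv : v ∈ s) :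
    ∃ a ∈ l, ∀ u ∈ s, u ∉ l → ¬ G.Adj a u := by
  match l, h with
  | [], h => simpa using h.length_le [v] ⟨by simp, by simp, by simpa using hv⟩
  | a :: t, h =>
    refine ⟨a, List.mem_cons_self, fun u hu hul hau => ?_⟩
    have hlonger : G.IsPathIn s (u :: a :: t) :=
      ⟨List.isChain_cons_cons.mpr ⟨hau.symm, h.isChain⟩, List.nodup_cons.mpr ⟨hul, h.nodup⟩,
        by simpa [hu] using h.mem⟩
    simpa using h.length_le _ hlonger

theorem exists_four_nonadj_of_not_mem_longestPaths {l₁ l₂ l₃ : List V}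
    (h₁ : G.IsLongestPathIn Set.univ l₁) (h₂ : G.IsLongestPathIn {x | x ∉ l₁} l₂)
    (h₃ : G.IsLongestPathIn {x | x ∉ l₁ ∧ x ∉ l₂} l₃) {v : V}
    (hv₁ : v ∉ l₁) (hv₂ : v ∉ l₂) (hv₃ : v ∉ l₃) :
    ∃ a b c d : V, [a, b, c, d].Nodup ∧
      ¬ G.Adj a b ∧ ¬ G.Adj a c ∧ ¬ G.Adj a d ∧ ¬ G.Adj b c ∧ ¬ G.Adj b d ∧ ¬ G.Adj c d := by
  obtain ⟨a, ha, ha_nonadj⟩ := h₁.exists_mem_forall_not_adj (Set.mem_univ v)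
  obtain ⟨b, hb, hb_nonadj⟩ := h₂.exists_mem_forall_not_adj hv₁
  obtain ⟨c, hc, hc_nonadj⟩ := h₃.exists_mem_forall_not_adj ⟨hv₁, hv₂⟩
  have hb₁ : b ∉ l₁ := h₂.mem b hb
  obtain ⟨hc₁, hc₂⟩ : c ∉ l₁ ∧ c ∉ l₂ := h₃.mem c hc
  refine ⟨a, b, c, v, ?_, ha_nonadj b trivial hb₁, ha_nonadj c trivial hc₁,
    ha_nonadj v trivial hv₁, hb_nonadj c hc₁ hc₂, hb_nonadj v hv₁ hv₂,
    hc_nonadj v ⟨hv₁, hv₂⟩ hv₃⟩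
  simp [ne_of_mem_of_not_mem ha hb₁, ne_of_mem_of_not_mem ha hc₁, ne_of_mem_of_not_mem ha hv₁,
    ne_of_mem_of_not_mem hb hc₂, ne_of_mem_of_not_mem hb hv₂, ne_of_mem_of_not_mem hc hv₃]

end SimpleGraph

theorem three_paths_of_complement_K4_free_general {V : Type*} [Fintype V] (G : SimpleGraph V)
    (hK4 : ¬ ∃ a b c d : V, [a, b, c, d].Nodup ∧
      ¬ G.Adj a b ∧ ¬ G.Adj a c ∧ ¬ G.Adj a d ∧ ¬ G.Adj b c ∧ ¬ G.Adj b d ∧ ¬ G.Adj c d) :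
    ∃ l1 l2 l3 : List V, l1.Chain' G.Adj ∧ l2.Chain' G.Adj ∧ l3.Chain' G.Adj ∧
      (l1 ++ l2 ++ l3).Nodup ∧ ∀ v : V, v ∈ l1 ++ l2 ++ l3 := by
  obtain ⟨l₁, h₁⟩ := G.exists_isLongestPathIn Set.univ
  obtain ⟨l₂, h₂⟩ := G.exists_isLongestPathIn {x | x ∉ l₁}
  obtain ⟨l₃, h₃⟩ := G.exists_isLongestPathIn {x | x ∉ l₁ ∧ x ∉ l₂}
  have hdisj₁₂ : l₁.Disjoint l₂ := fun x hx₁ hx₂ => h₂.mem x hx₂ hx₁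
  have hdisj₁₂₃ : (l₁ ++ l₂).Disjoint l₃ := fun x hx hx₃ =>
    (List.mem_append.mp hx).elim (h₃.mem x hx₃).1 (h₃.mem x hx₃).2
  refine ⟨l₁, l₂, l₃, h₁.isChain, h₂.isChain, h₃.isChain,
    (h₁.nodup.append h₂.nodup hdisj₁₂).append h₃.nodup hdisj₁₂₃, fun v => ?_⟩
  by_contra hv
  simp only [List.mem_append, not_or] at hv
  exact hK4 (SimpleGraph.exists_four_nonadj_of_not_mem_longestPaths h₁ h₂ h₃ hv.1.1 hv.1.2 hv.2)

/-- If the complement of `G` contains no `K₄` and the vertex set of `G` cannot be partitioned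
into two vertex-disjoint paths, then it can be partitioned into three (possibly empty)
vertex-disjoint paths. -/
theorem three_paths_of_complement_K4_free {V : Type*} [Fintype V] (G : SimpleGraph V)
    (hK4 : ¬ ∃ a b c d : V, [a, b, c, d].Nodup ∧
      ¬ G.Adj a b ∧ ¬ G.Adj a c ∧ ¬ G.Adj a d ∧ ¬ G.Adj b c ∧ ¬ G.Adj b d ∧ ¬ G.Adj c d)
    (h2 : ¬ ∃ l1 l2 : List V, l1.Chain' G.Adj ∧ l2.Chain' G.Adj ∧
      (l1 ++ l2).Nodup ∧ ∀ v : V, v ∈ l1 ++ l2) :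
    ∃ l1 l2 l3 : List V, l1.Chain' G.Adj ∧ l2.Chain' G.Adj ∧ l3.Chain' G.Adj ∧
      (l1 ++ l2 ++ l3).Nodup ∧ ∀ v : V, v ∈ l1 ++ l2 ++ l3 :=
  three_paths_of_complement_K4_free_general G hK4
end

section
/- Let n be a multiple of 3 and let A, B, C be disjoint sets of size 2n/3 each. Color a triple {x,y,z} red if (up to reordering) x,y ∈ A and z ∈ A ∪ B, or x,y ∈ B and z ∈ B ∪ C, or x,y ∈ C and z ∈ A ∪ C; color all other triples blue. Then this coloring of K_{2n}^{(3)} contains no blue copy of the Fano plane. -/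
open Finset

/-- A triple is red iff (up to reordering) two of its vertices lie in `A` and the third in
`A ∪ B`, or two lie in `B` and the third in `B ∪ C`, or two lie in `C` and the third in
`A ∪ C`. -/
def redABC {α : Type*} [DecidableEq α] (A B C : Finset α) (e : Finset α) : Prop :=
  (2 ≤ (e ∩ A).card ∧ e ⊆ A ∪ B) ∨ (2 ≤ (e ∩ B).card ∧ e ⊆ B ∪ C) ∨
    (2 ≤ (e ∩ C).card ∧ e ⊆ A ∪ C)

/-- count of a color among three -/
def cnt3 (k x y z : Fin 3) : ℕ :=
  (if x = k then 1 else 0) + (if y = k then 1 else 0) + (if z = k then 1 else 0)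

/-- red pattern on colors -/
def redTriple (x y z : Fin 3) : Prop :=
  (2 ≤ cnt3 0 x y z ∧ x ≠ 2 ∧ y ≠ 2 ∧ z ≠ 2) ∨
  (2 ≤ cnt3 1 x y z ∧ x ≠ 0 ∧ y ≠ 0 ∧ z ≠ 0) ∨
  (2 ≤ cnt3 2 x y z ∧ x ≠ 1 ∧ y ≠ 1 ∧ z ≠ 1)

instance (x y z : Fin 3) : Decidable (redTriple x y z) := by
  unfold redTriple; infer_instance

lemma keyFano : ∀ x0 x1 x2 x3 x4 x5 x6 : Fin 3,
    redTriple x0 x1 x2 ∨ redTriple x0 x3 x4 ∨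
    redTriple x0 x5 x6 ∨ redTriple x1 x3 x5 ∨
    redTriple x1 x4 x6 ∨ redTriple x2 x3 x6 ∨
    redTriple x2 x4 x5 := by decide

lemma cnt3_two {k x y z : Fin 3} (h : 2 ≤ cnt3 k x y z) :
    (x = k ∧ y = k) ∨ (x = k ∧ z = k) ∨ (y = k ∧ z = k) := by
  revert h; unfold cnt3; split_ifs <;> simp_all

lemma fin3_cases (t : Fin 3) : t = 0 ∨ t = 1 ∨ t = 2 := by omega

lemma two_le_inter {α : Type*} [DecidableEq α] {s D : Finset α} {u v : α}
    (huv : u ≠ v) (hu : u ∈ s) (hv : v ∈ s) (huD : u ∈ D) (hvD : v ∈ D) :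
    2 ≤ (s ∩ D).card := by
  have hsub : ({u, v} : Finset α) ⊆ s ∩ D := by
    intro x hx
    simp only [mem_insert, mem_singleton] at hx
    rcases hx with rfl | rfl <;> simp [mem_inter, hu, hv, huD, hvD]
  calc 2 = ({u, v} : Finset α).card := (card_pair huv).symm
    _ ≤ _ := card_le_card hsub

lemma bridge {α : Type*} [DecidableEq α] (A B C : Finset α) (a b c : α)
    (hab : a ≠ b) (hac : a ≠ c) (hbc : b ≠ c) (x y z : Fin 3)
    (ha0 : x = 0 → a ∈ A) (ha1 : x = 1 → a ∈ B) (ha2 : x = 2 → a ∈ C)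
    (hb0 : y = 0 → b ∈ A) (hb1 : y = 1 → b ∈ B) (hb2 : y = 2 → b ∈ C)
    (hc0 : z = 0 → c ∈ A) (hc1 : z = 1 → c ∈ B) (hc2 : z = 2 → c ∈ C)
    (h : redTriple x y z) :
    redABC A B C {a, b, c} := by
  have hmem : ∀ w ∈ ({a, b, c} : Finset α), w = a ∨ w = b ∨ w = c := by
    intro w hw; simpa [mem_insert, mem_singleton] using hw
  have haS : a ∈ ({a, b, c} : Finset α) := by simp
  have hbS : b ∈ ({a, b, c} : Finset α) := by simp
  have hcS : c ∈ ({a, b, c} : Finset α) := by simp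
  have key : ∀ (t : Fin 3) (w : α), (t = 0 → w ∈ A) → (t = 1 → w ∈ B) → (t = 2 → w ∈ C) →
      (t ≠ 2 → w ∈ A ∪ B) ∧ (t ≠ 0 → w ∈ B ∪ C) ∧ (t ≠ 1 → w ∈ A ∪ C) := by
    intro t w h0 h1 h2
    rcases fin3_cases t with rfl | rfl | rfl
    · exact ⟨fun _ => mem_union_left _ (h0 rfl), fun h => absurd rfl h,
        fun _ => mem_union_left _ (h0 rfl)⟩
    · exact ⟨fun _ => mem_union_right _ (h1 rfl), fun _ => mem_union_left _ (h1 rfl),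
        fun h => absurd rfl h⟩
    · exact ⟨fun h => absurd rfl h, fun _ => mem_union_right _ (h2 rfl),
        fun _ => mem_union_right _ (h2 rfl)⟩
  obtain ⟨ka1, ka2, ka3⟩ := key x a ha0 ha1 ha2
  obtain ⟨kb1, kb2, kb3⟩ := key y b hb0 hb1 hb2
  obtain ⟨kc1, kc2, kc3⟩ := key z c hc0 hc1 hc2
  rcases h with ⟨hcnt, hxa, hxb, hxc⟩ | ⟨hcnt, hxa, hxb, hxc⟩ | ⟨hcnt, hxa, hxb, hxc⟩
  · left
    refine ⟨?_, ?_⟩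
    · rcases cnt3_two hcnt with ⟨e1, e2⟩ | ⟨e1, e2⟩ | ⟨e1, e2⟩
      · exact two_le_inter hab haS hbS (ha0 e1) (hb0 e2)
      · exact two_le_inter hac haS hcS (ha0 e1) (hc0 e2)
      · exact two_le_inter hbc hbS hcS (hb0 e1) (hc0 e2)
    · intro w hw
      rcases hmem w hw with rfl | rfl | rfl
      exacts [ka1 hxa, kb1 hxb, kc1 hxc]
  · right; left
    refine ⟨?_, ?_⟩
    · rcases cnt3_two hcnt with ⟨e1, e2⟩ | ⟨e1, e2⟩ | ⟨e1, e2⟩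
      · exact two_le_inter hab haS hbS (ha1 e1) (hb1 e2)
      · exact two_le_inter hac haS hcS (ha1 e1) (hc1 e2)
      · exact two_le_inter hbc hbS hcS (hb1 e1) (hc1 e2)
    · intro w hw
      rcases hmem w hw with rfl | rfl | rfl
      exacts [ka2 hxa, kb2 hxb, kc2 hxc]
  · right; right
    refine ⟨?_, ?_⟩
    · rcases cnt3_two hcnt with ⟨e1, e2⟩ | ⟨e1, e2⟩ | ⟨e1, e2⟩
      · exact two_le_inter hab haS hbS (ha2 e1) (hb2 e2)
      · exact two_le_inter hac haS hcS (ha2 e1) (hc2 e2)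
      · exact two_le_inter hbc hbS hcS (hb2 e1) (hc2 e2)
    · intro w hw
      rcases hmem w hw with rfl | rfl | rfl
      exacts [ka3 hxa, kb3 hxb, kc3 hxc]

/-- The three-block coloring on `A ∪ B ∪ C` (each of size `2n/3`) contains no blue copy of
the Fano plane. -/
theorem no_blue_fano_three_blocks {α : Type*} [DecidableEq α] (n : ℕ) (hn : 3 ∣ n)
    (A B C : Finset α) (hA : A.card = 2 * n / 3) (hB : B.card = 2 * n / 3)
    (hC : C.card = 2 * n / 3)
    (hAB : Disjoint A B) (hAC : Disjoint A C) (hBC : Disjoint B C) :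
    ¬ ∃ f : Fin 7 → α, Function.Injective f ∧ (∀ i, f i ∈ A ∪ B ∪ C) ∧
      ∀ L ∈ fanoLines, ¬ redABC A B C (L.image f) := by
  rintro ⟨f, hinj, hmem, hblue⟩
  classical
  set c : Fin 7 → Fin 3 := fun i => if f i ∈ A then 0 else if f i ∈ B then 1 else 2 with hc
  have hc0 : ∀ i, c i = 0 → f i ∈ A := by
    intro i h
    by_contra hA'
    by_cases hB' : f i ∈ B
    · simp only [hc, if_neg hA', if_pos hB'] at h; exact absurd h (by decide)
    · simp only [hc, if_neg hA', if_neg hB'] at h; exact absurd h (by decide)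
  have hc1 : ∀ i, c i = 1 → f i ∈ B := by
    intro i h
    by_cases hA' : f i ∈ A
    · simp only [hc, if_pos hA'] at h; exact absurd h (by decide)
    · by_contra hB'
      simp only [hc, if_neg hA', if_neg hB'] at h; exact absurd h (by decide)
  have hc2 : ∀ i, c i = 2 → f i ∈ C := by
    intro i h
    by_cases hA' : f i ∈ A
    · simp only [hc, if_pos hA'] at h; exact absurd h (by decide)
    · by_cases hB' : f i ∈ B
      · simp only [hc, if_neg hA', if_pos hB'] at h; exact absurd h (by decide)
      · have := hmem i
        simp only [mem_union] at this
        tauto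
  have himg : ∀ i j k : Fin 7, (({i, j, k} : Finset (Fin 7)).image f) = {f i, f j, f k} := by
    intro i j k; simp [Finset.image_insert, Finset.image_singleton]
  have hb : ∀ i j k : Fin 7, i ≠ j → i ≠ k → j ≠ k →
      ({i, j, k} : Finset (Fin 7)) ∈ fanoLines → redTriple (c i) (c j) (c k) → False := by
    intro i j k hij hik hjk hL hr
    apply hblue _ hL
    rw [himg]
    exact bridge A B C (f i) (f j) (f k) (fun h => hij (hinj h)) (fun h => hik (hinj h))
      (fun h => hjk (hinj h)) (c i) (c j) (c k)
      (hc0 i) (hc1 i) (hc2 i) (hc0 j) (hc1 j) (hc2 j) (hc0 k) (hc1 k) (hc2 k) hr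
  rcases keyFano (c 0) (c 1) (c 2) (c 3) (c 4) (c 5) (c 6) with h | h | h | h | h | h | h
  · exact hb 0 1 2 (by decide) (by decide) (by decide) (by decide) h
  · exact hb 0 3 4 (by decide) (by decide) (by decide) (by decide) h
  · exact hb 0 5 6 (by decide) (by decide) (by decide) (by decide) h
  · exact hb 1 3 5 (by decide) (by decide) (by decide) (by decide) h
  · exact hb 1 4 6 (by decide) (by decide) (by decide) (by decide) h
  · exact hb 2 3 6 (by decide) (by decide) (by decide) (by decide) h
  · exact hb 2 4 5 (by decide) (by decide) (by decide) (by decide) h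
end

section
/- Let n ≥ 6 be a multiple of 3 and let A, B, C be disjoint sets of size 2n/3 each, colored as follows: a triple {x,y,z} is red iff (up to reordering) x,y ∈ A and z ∈ A ∪ B, or x,y ∈ B and z ∈ B ∪ C, or x,y ∈ C and z ∈ A ∪ C. Let P' be the 3-uniform hypergraph on n vertices v_1,...,v_n with edges {v_i,v_{i+1},v_{i+2}} for 1 ≤ i ≤ n-2, together with extra edges {v_2,v_3,v_6}, {v_1,v_2,v_5}, {v_1,v_4,v_6}. Then the coloring contains no red copy of P'. -/
open Finset

section Aux

variable {α : Type*} [DecidableEq α]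

lemma two_le_inter_s13 {e S : Finset α} {x y : α} (hxy : x ≠ y) (hx : x ∈ e) (hy : y ∈ e)
    (hxS : x ∈ S) (hyS : y ∈ S) : 2 ≤ (e ∩ S).card := by
  have hsub : ({x, y} : Finset α) ⊆ e ∩ S := by
    intro w hw
    simp only [Finset.mem_insert, Finset.mem_singleton] at hw
    rcases hw with rfl | rfl <;> exact Finset.mem_inter.mpr ⟨by assumption, by assumption⟩
  simpa [Finset.card_pair hxy] using Finset.card_le_card hsub

lemma card_triple_le {x y z : α} : ({x, y, z} : Finset α).card ≤ 3 := by
  calc ({x, y, z} : Finset α).card ≤ ({y, z} : Finset α).card + 1 := Finset.card_insert_le _ _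
    _ ≤ (({z} : Finset α).card + 1) + 1 := Nat.add_le_add_right (Finset.card_insert_le _ _) 1
    _ = 3 := by simp

lemma not_two_two {e S T : Finset α} (hST : Disjoint S T) (h1 : 2 ≤ (e ∩ S).card)
    (h2 : 2 ≤ (e ∩ T).card) (he : e.card ≤ 3) : False := by
  have hd : Disjoint (e ∩ S) (e ∩ T) :=
    hST.mono Finset.inter_subset_right Finset.inter_subset_right
  have hsub : (e ∩ S) ∪ (e ∩ T) ⊆ e := by
    intro w hw
    rcases Finset.mem_union.mp hw with h | h <;> exact (Finset.mem_inter.mp h).1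
  have hcard := Finset.card_le_card hsub
  rw [Finset.card_union_of_disjoint hd] at hcard
  omega

lemma red_twoB {A B C : Finset α} (hAB : Disjoint A B) (hAC : Disjoint A C)
    (hBC : Disjoint B C) {e : Finset α} (hred : redABC A B C e)
    (hB2 : 2 ≤ (e ∩ B).card) (hC : ∀ w ∈ e, w ∉ C) (he : e.card ≤ 3) : e ⊆ B := by
  unfold redABC at hred
  rcases hred with ⟨h1, _⟩ | ⟨_, h2⟩ | ⟨h3, _⟩
  · exact (not_two_two hAB h1 hB2 he).elim
  · intro w hw
    rcases Finset.mem_union.mp (h2 hw) with h | h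
    · exact h
    · exact absurd h (hC w hw)
  · exfalso
    have hempty : e ∩ C = ∅ := by
      apply Finset.eq_empty_of_forall_notMem
      intro w hw
      exact hC w (Finset.mem_inter.mp hw).1 (Finset.mem_inter.mp hw).2
    rw [hempty] at h3
    simp at h3

lemma killBBA {A B C : Finset α} (hAB : Disjoint A B) (hAC : Disjoint A C)
    (hBC : Disjoint B C) {x y z : α} {e : Finset α} (hz : z ∈ e)
    (hall : ∀ w ∈ e, w = x ∨ w = y ∨ w = z)
    (hxB : x ∈ B) (hyB : y ∈ B) (hzA : z ∈ A) :
    ¬ redABC A B C e := by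
  intro hred
  unfold redABC at hred
  rcases hred with ⟨h1, _⟩ | ⟨_, h2⟩ | ⟨h3, _⟩
  · have hsub : e ∩ A ⊆ {z} := by
      intro w hw
      have hw' := Finset.mem_inter.mp hw
      rcases hall w hw'.1 with rfl | rfl | rfl
      · exact absurd hw'.2 (Finset.disjoint_right.mp hAB hxB)
      · exact absurd hw'.2 (Finset.disjoint_right.mp hAB hyB)
      · exact Finset.mem_singleton_self _
    have hcard := Finset.card_le_card hsub
    simp at hcard
    omega
  · rcases Finset.mem_union.mp (h2 hz) with h | h
    · exact Finset.disjoint_left.mp hAB hzA h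
    · exact Finset.disjoint_left.mp hAC hzA h
  · have hempty : e ∩ C = ∅ := by
      apply Finset.eq_empty_of_forall_notMem
      intro w hw
      have hw' := Finset.mem_inter.mp hw
      rcases hall w hw'.1 with rfl | rfl | rfl
      · exact Finset.disjoint_left.mp hBC hxB hw'.2
      · exact Finset.disjoint_left.mp hBC hyB hw'.2
      · exact Finset.disjoint_left.mp hAC hzA hw'.2
    rw [hempty] at h3
    simp at h3

lemma red_rotate {A B C e : Finset α} : redABC A B C e ↔ redABC B C A e := by
  unfold redABC
  constructor
  · rintro (h | h | h)
    · exact Or.inr (Or.inr ⟨h.1, by rw [Finset.union_comm]; exact h.2⟩)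
    · exact Or.inl h
    · exact Or.inr (Or.inl ⟨h.1, by rw [Finset.union_comm]; exact h.2⟩)
  · rintro (h | h | h)
    · exact Or.inr (Or.inl h)
    · exact Or.inr (Or.inr ⟨h.1, by rw [Finset.union_comm]; exact h.2⟩)
    · exact Or.inl ⟨h.1, by rw [Finset.union_comm]; exact h.2⟩

lemma union_rot {A B C : Finset α} : A ∪ B ∪ C = B ∪ C ∪ A := by
  ext x
  simp only [Finset.mem_union]
  tauto

lemma core (m : ℕ) (hm : 2 ≤ m) (A B C : Finset α)
    (hA : A.card = 2 * m)
    (hAB : Disjoint A B) (hAC : Disjoint A C) (hBC : Disjoint B C)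
    (f : ℕ → α)
    (hinj : ∀ i < 3 * m, ∀ j < 3 * m, f i = f j → i = j)
    (hmem : ∀ i < 3 * m, f i ∈ A ∪ B ∪ C)
    (hwin : ∀ i, i + 2 < 3 * m → redABC A B C {f i, f (i + 1), f (i + 2)})
    (p q : ℕ) (hp : p < 3) (hq : q < 3) (hpq : p ≠ q) (hpA : f p ∈ A) (hqA : f q ∈ A)
    (he1 : redABC A B C {f 1, f 2, f 5}) (he2 : redABC A B C {f 0, f 1, f 4})
    (he3 : redABC A B C {f 0, f 3, f 5}) : False := by
  have hm6 : 6 ≤ 3 * m := by omega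
  have hne : ∀ i j : ℕ, i < 3 * m → j < 3 * m → i ≠ j → f i ≠ f j :=
    fun i j hi hj hij h => hij (hinj i hi j hj h)
  have hB01 : f 0 ∈ B → f 1 ∈ B → False := by
    intro h0 h1
    rcases (show p ≤ 1 ∨ q ≤ 1 by omega) with h | h
    · have hpB : f p ∈ B := by interval_cases p <;> assumption
      exact Finset.disjoint_left.mp hAB hpA hpB
    · have hqB : f q ∈ B := by interval_cases q <;> assumption
      exact Finset.disjoint_left.mp hAB hqA hqB
  -- descent: two consecutive B's propagate back to positions 0 and 1
  have hdesc : ∀ t, t + 2 < 3 * m → (∀ u, u ≤ t + 2 → f u ∉ C) →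
      f (t + 1) ∈ B → f (t + 2) ∈ B → False := by
    intro t
    induction t with
    | zero =>
      intro h2 hCu hb1 hb2
      have hred : redABC A B C {f 0, f 1, f 2} := hwin 0 (by omega)
      have hsub := red_twoB hAB hAC hBC hred
        (two_le_inter_s13 (hne 1 2 (by omega) (by omega) (by omega)) (by simp) (by simp) hb1 hb2)
        (by
          intro w hw
          simp only [Finset.mem_insert, Finset.mem_singleton] at hw
          rcases hw with rfl | rfl | rfl
          exacts [hCu 0 (by omega), hCu 1 (by omega), hCu 2 (by omega)])
        card_triple_le
      exact hB01 (hsub (by simp)) hb1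
    | succ t ih =>
      intro h2 hCu hb1 hb2
      have hred : redABC A B C {f (t + 1), f (t + 2), f (t + 3)} := hwin (t + 1) (by omega)
      have hsub := red_twoB hAB hAC hBC hred
        (two_le_inter_s13 (hne (t + 2) (t + 3) (by omega) (by omega) (by omega))
          (by simp) (by simp) hb1 hb2)
        (by
          intro w hw
          simp only [Finset.mem_insert, Finset.mem_singleton] at hw
          rcases hw with rfl | rfl | rfl
          exacts [hCu (t + 1) (by omega), hCu (t + 2) (by omega), hCu (t + 3) (by omega)])
        card_triple_le
      exact ih (by omega) (fun u hu => hCu u (by omega)) (hsub (by simp)) hb1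
  -- no vertex lies in C
  have hnoC : ∀ k, k < 3 * m → f k ∉ C := by
    intro k
    induction k using Nat.strong_induction_on with
    | _ k ih =>
      intro hk hkC
      rcases Nat.lt_or_ge k 3 with hk3 | hk3
      · have hred : redABC A B C {f 0, f 1, f 2} := hwin 0 (by omega)
        have hpe : f p ∈ ({f 0, f 1, f 2} : Finset α) := by interval_cases p <;> simp
        have hqe : f q ∈ ({f 0, f 1, f 2} : Finset α) := by interval_cases q <;> simp
        have hke : f k ∈ ({f 0, f 1, f 2} : Finset α) := by interval_cases k <;> simp
        have hA2 : 2 ≤ (({f 0, f 1, f 2} : Finset α) ∩ A).card :=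
          two_le_inter_s13 (hne p q (by omega) (by omega) hpq) hpe hqe hpA hqA
        unfold redABC at hred
        rcases hred with ⟨_, hsub⟩ | ⟨hB2, _⟩ | ⟨hC2, _⟩
        · rcases Finset.mem_union.mp (hsub hke) with h | h
          · exact Finset.disjoint_left.mp hAC h hkC
          · exact Finset.disjoint_left.mp hBC h hkC
        · exact not_two_two hAB hA2 hB2 card_triple_le
        · exact not_two_two hAC hA2 hC2 card_triple_le
      · obtain ⟨j, rfl⟩ : ∃ j, k = j + 3 := ⟨k - 3, by omega⟩
        have hred : redABC A B C {f (j + 1), f (j + 2), f (j + 3)} := hwin (j + 1) (by omega)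
        have hCne : ∀ u, u < j + 3 → f u ∉ C := fun u hu => ih u hu (by omega)
        have hBj : f (j + 1) ∈ B ∧ f (j + 2) ∈ B := by
          unfold redABC at hred
          rcases hred with ⟨_, hsub⟩ | ⟨_, hsub⟩ | ⟨hC2, _⟩
          · rcases Finset.mem_union.mp (hsub (by simp : f (j + 3) ∈ _)) with h | h
            · exact absurd hkC (Finset.disjoint_left.mp hAC h)
            · exact absurd hkC (Finset.disjoint_left.mp hBC h)
          · constructor
            · rcases Finset.mem_union.mp (hsub (by simp : f (j + 1) ∈ _)) with h | h
              · exact h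
              · exact absurd h (hCne (j + 1) (by omega))
            · rcases Finset.mem_union.mp (hsub (by simp : f (j + 2) ∈ _)) with h | h
              · exact h
              · exact absurd h (hCne (j + 2) (by omega))
          · exfalso
            have hsub : ({f (j + 1), f (j + 2), f (j + 3)} : Finset α) ∩ C ⊆ {f (j + 3)} := by
              intro w hw
              obtain ⟨hwe, hwC⟩ := Finset.mem_inter.mp hw
              simp only [Finset.mem_insert, Finset.mem_singleton] at hwe ⊢
              rcases hwe with rfl | rfl | rfl
              · exact absurd hwC (hCne (j + 1) (by omega))
              · exact absurd hwC (hCne (j + 2) (by omega))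
              · rfl
            have hcard := Finset.card_le_card hsub
            simp at hcard
            omega
        exact hdesc j (by omega) (fun u hu => hCne u (by omega)) hBj.1 hBj.2
  have hABmem : ∀ i, i < 3 * m → f i ∈ A ∨ f i ∈ B := by
    intro i hi
    rcases Finset.mem_union.mp (hmem i hi) with h | h
    · rcases Finset.mem_union.mp h with h' | h'
      · exact Or.inl h'
      · exact Or.inr h'
    · exact absurd h (hnoC i hi)
  -- no two B's within distance 2
  have noBB : ∀ i j, i < j → j ≤ i + 2 → j < 3 * m → f i ∈ B → f j ∈ B → False := by
    intro i j hij hj2 hj hiB hjB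
    set w := min i (3 * m - 3) with hw
    have hw2 : w + 2 < 3 * m := by omega
    have hiw : i = w ∨ i = w + 1 ∨ i = w + 2 := by omega
    have hjw : j = w ∨ j = w + 1 ∨ j = w + 2 := by omega
    have hE : ∀ u, u = w ∨ u = w + 1 ∨ u = w + 2 →
        f u ∈ ({f w, f (w + 1), f (w + 2)} : Finset α) := by
      rintro u (rfl | rfl | rfl) <;> simp
    have hred : redABC A B C {f w, f (w + 1), f (w + 2)} := hwin w hw2
    have hsub := red_twoB hAB hAC hBC hred
      (two_le_inter_s13 (hne i j (by omega) hj (by omega)) (hE i hiw) (hE j hjw) hiB hjB)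
      (by
        intro x hx
        simp only [Finset.mem_insert, Finset.mem_singleton] at hx
        rcases hx with rfl | rfl | rfl
        exacts [hnoC w (by omega), hnoC (w + 1) (by omega), hnoC (w + 2) hw2])
      card_triple_le
    exact hdesc w hw2 (fun u hu => hnoC u (by omega)) (hsub (by simp)) (hsub (by simp))
  -- counting
  set S := (Finset.range (3 * m)).filter (fun i => f i ∈ B) with hS
  set T := (Finset.range (3 * m)).filter (fun i => f i ∈ A) with hT
  have hTcard : T.card ≤ 2 * m := by
    have hinjT : Set.InjOn f T := by
      intro i hi j hj h
      have hi' := Finset.mem_range.mp (Finset.mem_filter.mp (Finset.mem_coe.mp hi)).1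
      have hj' := Finset.mem_range.mp (Finset.mem_filter.mp (Finset.mem_coe.mp hj)).1
      exact hinj i hi' j hj' h
    have h1 : (T.image f).card = T.card := Finset.card_image_of_injOn hinjT
    have h2 : T.image f ⊆ A := by
      intro a ha
      obtain ⟨i, hi, rfl⟩ := Finset.mem_image.mp ha
      exact (Finset.mem_filter.mp hi).2
    have h3 := Finset.card_le_card h2
    omega
  have hScard : m ≤ S.card := by
    have hd : Disjoint S T := by
      rw [Finset.disjoint_left]
      intro i hiS hiT
      exact Finset.disjoint_left.mp hAB (Finset.mem_filter.mp hiT).2 (Finset.mem_filter.mp hiS).2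
    have hu : S ∪ T = Finset.range (3 * m) := by
      apply Finset.Subset.antisymm
      · intro i hi
        rcases Finset.mem_union.mp hi with h | h
        · exact (Finset.mem_filter.mp h).1
        · exact (Finset.mem_filter.mp h).1
      · intro i hi
        rcases hABmem i (Finset.mem_range.mp hi) with h | h
        · exact Finset.mem_union_right _ (Finset.mem_filter.mpr ⟨hi, h⟩)
        · exact Finset.mem_union_left _ (Finset.mem_filter.mpr ⟨hi, h⟩)
    have hcu := Finset.card_union_of_disjoint hd
    rw [hu, Finset.card_range] at hcu
    omega
  have hblock : ∀ t, t < m → ∃ i, i ∈ S ∧ 3 * t ≤ i ∧ i < 3 * t + 3 := by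
    intro t ht
    by_contra hcon
    push_neg at hcon
    have hinj3 : Set.InjOn (fun i => i / 3) S := by
      intro i hi j hj hij
      simp only at hij
      have hi' := Finset.mem_filter.mp (Finset.mem_coe.mp hi)
      have hj' := Finset.mem_filter.mp (Finset.mem_coe.mp hj)
      have hiR := Finset.mem_range.mp hi'.1
      have hjR := Finset.mem_range.mp hj'.1
      by_contra hne'
      rcases Nat.lt_or_ge i j with h | h
      · exact noBB i j h (by omega) hjR hi'.2 hj'.2
      · exact noBB j i (by omega) (by omega) hiR hj'.2 hi'.2
    have hmaps : ∀ i ∈ S, i / 3 ∈ (Finset.range m).erase t := by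
      intro i hi
      have hi' := Finset.mem_filter.mp hi
      have hiR := Finset.mem_range.mp hi'.1
      refine Finset.mem_erase.mpr ⟨?_, Finset.mem_range.mpr (by omega)⟩
      intro h
      have := hcon i hi (by omega)
      omega
    have hle := Finset.card_le_card_of_injOn (fun i => i / 3) hmaps hinj3
    rw [Finset.card_erase_of_mem (Finset.mem_range.mpr ht), Finset.card_range] at hle
    omega
  obtain ⟨i0, hi0S, hi0l, hi0u⟩ := hblock 0 (by omega)
  obtain ⟨i1, hi1S, hi1l, hi1u⟩ := hblock 1 (by omega)
  have fB0 : f i0 ∈ B := (Finset.mem_filter.mp hi0S).2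
  have fB1 : f i1 ∈ B := (Finset.mem_filter.mp hi1S).2
  have hgap : i0 + 3 ≤ i1 := by
    by_contra hcon
    exact noBB i0 i1 (by omega) (by omega) (by omega) fB0 fB1
  have hAat : ∀ u, u < 6 → u ≠ i0 → u ≠ i1 → f u ∈ A := by
    intro u hu h0 h1
    rcases hABmem u (by omega) with h | h
    · exact h
    exfalso
    rcases Nat.lt_or_ge u 3 with hu3 | hu3
    · rcases Nat.lt_or_ge u i0 with h' | h'
      · exact noBB u i0 h' (by omega) (by omega) h fB0
      · exact noBB i0 u (by omega) (by omega) (by omega) fB0 h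
    · rcases Nat.lt_or_ge u i1 with h' | h'
      · exact noBB u i1 h' (by omega) (by omega) h fB1
      · exact noBB i1 u (by omega) (by omega) (by omega) fB1 h
  have h03 : i0 < 3 := by omega
  have h36 : 3 ≤ i1 := by omega
  have h6 : i1 < 6 := by omega
  interval_cases i0 <;> interval_cases i1
  · -- (0,3): edge {f 0, f 3, f 5} has pattern B B A
    exact killBBA hAB hAC hBC (z := f 5) (by simp)
      (by intro w hw; simp only [Finset.mem_insert, Finset.mem_singleton] at hw
          rcases hw with h | h | h
          exacts [Or.inl h, Or.inr (Or.inl h), Or.inr (Or.inr h)])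
      fB0 fB1 (hAat 5 (by omega) (by omega) (by omega)) he3
  · -- (0,4): edge {f 0, f 1, f 4} has pattern B A B
    exact killBBA hAB hAC hBC (z := f 1) (by simp)
      (by intro w hw; simp only [Finset.mem_insert, Finset.mem_singleton] at hw
          rcases hw with h | h | h
          exacts [Or.inl h, Or.inr (Or.inr h), Or.inr (Or.inl h)])
      fB0 fB1 (hAat 1 (by omega) (by omega) (by omega)) he2
  · -- (0,5): edge {f 0, f 3, f 5} has pattern B A B
    exact killBBA hAB hAC hBC (z := f 3) (by simp)
      (by intro w hw; simp only [Finset.mem_insert, Finset.mem_singleton] at hw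
          rcases hw with h | h | h
          exacts [Or.inl h, Or.inr (Or.inr h), Or.inr (Or.inl h)])
      fB0 fB1 (hAat 3 (by omega) (by omega) (by omega)) he3
  · -- (1,4): edge {f 0, f 1, f 4} has pattern A B B
    exact killBBA hAB hAC hBC (z := f 0) (by simp)
      (by intro w hw; simp only [Finset.mem_insert, Finset.mem_singleton] at hw
          rcases hw with h | h | h
          exacts [Or.inr (Or.inr h), Or.inl h, Or.inr (Or.inl h)])
      fB0 fB1 (hAat 0 (by omega) (by omega) (by omega)) he2
  · -- (1,5): edge {f 1, f 2, f 5} has pattern B A B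
    exact killBBA hAB hAC hBC (z := f 2) (by simp)
      (by intro w hw; simp only [Finset.mem_insert, Finset.mem_singleton] at hw
          rcases hw with h | h | h
          exacts [Or.inl h, Or.inr (Or.inr h), Or.inr (Or.inl h)])
      fB0 fB1 (hAat 2 (by omega) (by omega) (by omega)) he1
  · -- (2,5): edge {f 1, f 2, f 5} has pattern A B B
    exact killBBA hAB hAC hBC (z := f 1) (by simp)
      (by intro w hw; simp only [Finset.mem_insert, Finset.mem_singleton] at hw
          rcases hw with h | h | h
          exacts [Or.inr (Or.inr h), Or.inl h, Or.inr (Or.inl h)])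
      fB0 fB1 (hAat 1 (by omega) (by omega) (by omega)) he1

end Aux

/-- The three-block coloring contains no red copy of `P'`, the tight path on `n` vertices
together with the extra edges `{v₂,v₃,v₆}`, `{v₁,v₂,v₅}`, `{v₁,v₄,v₆}` (1-indexed). -/
theorem no_red_Pprime_three_blocks {α : Type*} [DecidableEq α] (n : ℕ) (hn : 3 ∣ n)
    (hn6 : 6 ≤ n) (A B C : Finset α) (hA : A.card = 2 * n / 3) (hB : B.card = 2 * n / 3)
    (hC : C.card = 2 * n / 3)
    (hAB : Disjoint A B) (hAC : Disjoint A C) (hBC : Disjoint B C) :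
    ¬ ∃ f : ℕ → α, (∀ i < n, ∀ j < n, f i = f j → i = j) ∧ (∀ i < n, f i ∈ A ∪ B ∪ C) ∧
      (∀ i, i + 2 < n → redABC A B C {f i, f (i + 1), f (i + 2)}) ∧
      redABC A B C {f 1, f 2, f 5} ∧ redABC A B C {f 0, f 1, f 4} ∧
      redABC A B C {f 0, f 3, f 5} := by
  obtain ⟨m, rfl⟩ := hn
  have hm : 2 ≤ m := by omega
  have hA' : A.card = 2 * m := by omega
  have hB' : B.card = 2 * m := by omega
  have hC' : C.card = 2 * m := by omega
  rintro ⟨f, hinj, hmem, hwin, he1, he2, he3⟩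
  have hw0 : redABC A B C {f 0, f 1, f 2} := hwin 0 (by omega)
  have getpair : ∀ X : Finset α, 2 ≤ (({f 0, f 1, f 2} : Finset α) ∩ X).card →
      ∃ p q, p < 3 ∧ q < 3 ∧ p ≠ q ∧ f p ∈ X ∧ f q ∈ X := by
    intro X hX
    have h1 : 1 < (({f 0, f 1, f 2} : Finset α) ∩ X).card := by omega
    obtain ⟨a, ha, b, hb, hab⟩ := Finset.one_lt_card.mp h1
    obtain ⟨haE, haX⟩ := Finset.mem_inter.mp ha
    obtain ⟨hbE, hbX⟩ := Finset.mem_inter.mp hb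
    simp only [Finset.mem_insert, Finset.mem_singleton] at haE hbE
    obtain ⟨p, hp, rfl⟩ : ∃ p, p < 3 ∧ a = f p := by
      rcases haE with h | h | h
      exacts [⟨0, by omega, h⟩, ⟨1, by omega, h⟩, ⟨2, by omega, h⟩]
    obtain ⟨q, hq, rfl⟩ : ∃ q, q < 3 ∧ b = f q := by
      rcases hbE with h | h | h
      exacts [⟨0, by omega, h⟩, ⟨1, by omega, h⟩, ⟨2, by omega, h⟩]
    exact ⟨p, q, hp, hq, fun h => hab (by rw [h]), haX, hbX⟩
  have hmemB : ∀ i, i < 3 * m → f i ∈ B ∪ C ∪ A := by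
    intro i hi
    have := hmem i hi
    rwa [union_rot] at this
  have hmemC : ∀ i, i < 3 * m → f i ∈ C ∪ A ∪ B := by
    intro i hi
    have := hmemB i hi
    rwa [union_rot] at this
  have hw0' := hw0
  unfold redABC at hw0'
  rcases hw0' with ⟨h2, _⟩ | ⟨h2, _⟩ | ⟨h2, _⟩
  · obtain ⟨p, q, hp, hq, hpq, hpX, hqX⟩ := getpair A h2
    exact core m hm A B C hA' hAB hAC hBC f hinj hmem hwin p q hp hq hpq hpX hqX he1 he2 he3
  · obtain ⟨p, q, hp, hq, hpq, hpX, hqX⟩ := getpair B h2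
    exact core m hm B C A hB' hBC hAB.symm hAC.symm f hinj hmemB
      (fun i hi => red_rotate.mp (hwin i hi)) p q hp hq hpq hpX hqX
      (red_rotate.mp he1) (red_rotate.mp he2) (red_rotate.mp he3)
  · obtain ⟨p, q, hp, hq, hpq, hpX, hqX⟩ := getpair C h2
    exact core m hm C A B hC' hAC.symm hBC.symm hAB f hinj hmemC
      (fun i hi => red_rotate.mp (red_rotate.mp (hwin i hi))) p q hp hq hpq hpX hqX
      (red_rotate.mp (red_rotate.mp he1)) (red_rotate.mp (red_rotate.mp he2))
      (red_rotate.mp (red_rotate.mp he3))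
end

section
/- For the 3-uniform hypergraph P' obtained from the tight path on n vertices by adding the edges {v_2,v_3,v_6}, {v_1,v_2,v_5}, {v_1,v_4,v_6}, and for n a sufficiently large multiple of 3, the Ramsey number satisfies R(P', F) > 2n, where F is the Fano plane. -/
/-!
Colour the vertices by their residue mod 3; a triple is red when two of its vertices have some
colour `X` and the third has colour `X` or `X + 1`. Consecutive windows of a red tight path overlap
in two vertices, which forces all windows to have the same majority colour `X`, and each window
has at least two vertices of colour `X`. The three extra edges of `P'` leave room for only one
vertex of another colour among the first six, so a red `P'` on `n = 3m` vertices has at least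
`2m + 1` vertices of colour `X`, more than the `2m` available. A blue Fano plane would be a
3-colouring of the Fano plane with no red line, and a finite check shows there is none.
-/

open Finset

/-- Vertices are 0-indexed: the extra edges `{v₂,v₃,v₆}`, `{v₁,v₂,v₅}`, `{v₁,v₄,v₆}` of `P'` are
`{f 1, f 2, f 5}`, `{f 0, f 1, f 4}`, `{f 0, f 3, f 5}`. -/
def HasRedPprime {α : Type*} [DecidableEq α] (red : Finset α → Prop) (n : ℕ) : Prop :=
  ∃ f : ℕ → α, (∀ i < n, ∀ j < n, f i = f j → i = j) ∧
    (∀ i, i + 2 < n → red ({f i, f (i + 1), f (i + 2)} : Finset α)) ∧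
    red {f 1, f 2, f 5} ∧ red {f 0, f 1, f 4} ∧ red {f 0, f 3, f 5}

/-- The classes `A, B, C` of the witnessing colouring are the colours `0, 1, 2`. -/
def IsCyclicRed (s : Multiset (Fin 3)) : Prop :=
  ∃ X : Fin 3, s = {X, X, X} ∨ s = {X, X, X + 1}

instance : DecidablePred IsCyclicRed := fun _ => by unfold IsCyclicRed; infer_instance

def cyclicColoring {α : Type*} (γ : α → Fin 3) (e : Finset α) : Prop :=
  IsCyclicRed (e.val.map γ)

lemma cyclicColoring_triple_iff {α : Type*} [DecidableEq α] {γ : α → Fin 3} {u v w : α}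
    (huv : u ≠ v) (huw : u ≠ w) (hvw : v ≠ w) :
    cyclicColoring γ {u, v, w} ↔ IsCyclicRed {γ u, γ v, γ w} := by
  rw [cyclicColoring, insert_val_of_notMem (by simp [huv, huw]),
    insert_val_of_notMem (by simp [hvw])]
  rfl

/-- The repeated colour, whenever two of `a, b, c` agree. -/
def majorityColor (a b c : Fin 3) : Fin 3 := if a = b then a else c

lemma majorityColor_eq_of_isCyclicRed :
    ∀ a b c d : Fin 3, IsCyclicRed {a, b, c} → IsCyclicRed {b, c, d} →
      majorityColor a b c = majorityColor b c d := by
  decide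

lemma two_le_count_majorityColor :
    ∀ a b c : Fin 3, IsCyclicRed {a, b, c} →
      2 ≤ Multiset.count (majorityColor a b c) {a, b, c} := by
  decide

lemma five_le_count_majorityColor :
    ∀ c₀ c₁ c₂ c₃ c₄ c₅ : Fin 3, IsCyclicRed {c₀, c₁, c₂} → IsCyclicRed {c₁, c₂, c₃} →
      IsCyclicRed {c₂, c₃, c₄} → IsCyclicRed {c₃, c₄, c₅} → IsCyclicRed {c₁, c₂, c₅} →
      IsCyclicRed {c₀, c₁, c₄} → IsCyclicRed {c₀, c₃, c₅} →
      5 ≤ Multiset.count (majorityColor c₀ c₁ c₂) {c₀, c₁, c₂} +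
        Multiset.count (majorityColor c₀ c₁ c₂) {c₃, c₄, c₅} := by
  decide

lemma isCyclicRed_of_fano :
    ∀ c₀ c₁ c₂ c₃ c₄ c₅ c₆ : Fin 3,
      IsCyclicRed {c₀, c₁, c₂} ∨ IsCyclicRed {c₀, c₃, c₄} ∨ IsCyclicRed {c₀, c₅, c₆} ∨
      IsCyclicRed {c₁, c₃, c₅} ∨ IsCyclicRed {c₁, c₄, c₆} ∨ IsCyclicRed {c₂, c₃, c₆} ∨
      IsCyclicRed {c₂, c₄, c₅} := by
  decide

lemma exists_fanoLine_isCyclicRed (c : Fin 7 → Fin 3) :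
    ∃ L ∈ fanoLines, IsCyclicRed (L.val.map c) := by
  rcases isCyclicRed_of_fano (c 0) (c 1) (c 2) (c 3) (c 4) (c 5) (c 6)
    with h | h | h | h | h | h | h
  · exact ⟨{0, 1, 2}, by decide, h⟩
  · exact ⟨{0, 3, 4}, by decide, h⟩
  · exact ⟨{0, 5, 6}, by decide, h⟩
  · exact ⟨{1, 3, 5}, by decide, h⟩
  · exact ⟨{1, 4, 6}, by decide, h⟩
  · exact ⟨{2, 3, 6}, by decide, h⟩
  · exact ⟨{2, 4, 5}, by decide, h⟩

theorem not_hasBlueFano_cyclicColoring {α : Type*} [DecidableEq α] (γ : α → Fin 3) :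
    ¬ HasBlueFano (fun e => ¬ cyclicColoring γ e) := by
  rintro ⟨f, hf, hblue⟩
  obtain ⟨L, hL, hred⟩ := exists_fanoLine_isCyclicRed (γ ∘ f)
  apply hblue L hL
  rwa [cyclicColoring, image_val_of_injOn hf.injOn, Multiset.map_map]

section ColorSequence

variable (p : ℕ → Fin 3)

def colorCount (X : Fin 3) (k : ℕ) : ℕ := #{i ∈ range k | p i = X}

lemma colorCount_add_three (X : Fin 3) (k : ℕ) :
    colorCount p X (k + 3) = colorCount p X k + Multiset.count X {p k, p (k + 1), p (k + 2)} := by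
  simp only [colorCount, card_filter, sum_range_succ, Multiset.insert_eq_cons,
    Multiset.count_cons, Multiset.count_singleton]
  grind

lemma majorityColor_window_eq {n : ℕ}
    (hpath : ∀ i, i + 2 < n → IsCyclicRed {p i, p (i + 1), p (i + 2)}) :
    ∀ i, i + 2 < n →
      majorityColor (p i) (p (i + 1)) (p (i + 2)) = majorityColor (p 0) (p 1) (p 2)
  | 0, _ => rfl
  | i + 1, hi => by
    rw [← majorityColor_window_eq hpath i (by omega)]
    exact (majorityColor_eq_of_isCyclicRed _ _ _ _ (hpath i (by omega)) (hpath (i + 1) hi)).symm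

lemma two_mul_lt_colorCount_majorityColor {m : ℕ} (hm : 2 ≤ m)
    (hpath : ∀ i, i + 2 < 3 * m → IsCyclicRed {p i, p (i + 1), p (i + 2)})
    (h125 : IsCyclicRed {p 1, p 2, p 5}) (h014 : IsCyclicRed {p 0, p 1, p 4})
    (h035 : IsCyclicRed {p 0, p 3, p 5}) :
    2 * m < colorCount p (majorityColor (p 0) (p 1) (p 2)) (3 * m) := by
  set X := majorityColor (p 0) (p 1) (p 2) with hX
  have hsix : 5 ≤ colorCount p X 6 := by
    have := five_le_count_majorityColor _ _ _ _ _ _ (hpath 0 (by omega)) (hpath 1 (by omega))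
      (hpath 2 (by omega)) (hpath 3 (by omega)) h125 h014 h035
    rwa [colorCount_add_three p X 3, colorCount_add_three p X 0, colorCount, range_zero,
      filter_empty, card_empty, zero_add]
  induction m, hm using Nat.le_induction with
  | base => exact hsix
  | succ k hk ih =>
    have hwin := two_le_count_majorityColor _ _ _ (hpath (3 * k) (by omega))
    rw [majorityColor_window_eq p hpath (3 * k) (by omega), ← hX] at hwin
    rw [show 3 * (k + 1) = 3 * k + 3 by ring, colorCount_add_three]
    have := ih (fun i hi => hpath i (by omega))
    omega

end ColorSequence

theorem not_hasRedPprime_cyclicColoring {α : Type*} [Fintype α] [DecidableEq α]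
    (γ : α → Fin 3) {m : ℕ} (hm : 2 ≤ m) (hclass : ∀ X, #{v | γ v = X} ≤ 2 * m) :
    ¬ HasRedPprime (cyclicColoring γ) (3 * m) := by
  rintro ⟨f, hinj, hpath, h125, h014, h035⟩
  have hred : ∀ i j k, i < j → j < k → k < 3 * m →
      cyclicColoring γ {f i, f j, f k} → IsCyclicRed {γ (f i), γ (f j), γ (f k)} :=
    fun i j k hij hjk hk => (cyclicColoring_triple_iff
      (mt (hinj i (by omega) j (by omega)) (by omega))
      (mt (hinj i (by omega) k hk) (by omega)) (mt (hinj j (by omega) k hk) (by omega))).1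
  have hlt := two_mul_lt_colorCount_majorityColor (γ ∘ f) hm
    (fun i hi => hred _ _ _ (by omega) (by omega) hi (hpath i hi))
    (hred _ _ _ (by omega) (by omega) (by omega) h125)
    (hred _ _ _ (by omega) (by omega) (by omega) h014)
    (hred _ _ _ (by omega) (by omega) (by omega) h035)
  have hle (X : Fin 3) : colorCount (γ ∘ f) X (3 * m) ≤ #{v | γ v = X} :=
    card_le_card_of_injOn f (fun i hi => by simpa using (mem_filter.1 hi).2)
      fun i hi j hj => hinj i (mem_range.1 (mem_filter.1 hi).1) j (mem_range.1 (mem_filter.1 hj).1)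
  exact (hlt.trans_le ((hle _).trans (hclass _))).false

lemma card_filter_ofNat_le {N k : ℕ} (hN : N ≤ 3 * k) (X : Fin 3) :
    #{v : Fin N | Fin.ofNat 3 v = X} ≤ k := by
  simpa using card_le_card_of_injOn (t := range k) (fun v : Fin N => (v : ℕ) / 3)
    (fun v _ => by simpa using (by omega : (v : ℕ) / 3 < k))
    (fun v hv w hw h => by
      simp only [Fin.ext_iff, Fin.val_natCast, coe_filter, mem_univ, true_and,
        Set.mem_ofPred_eq] at hv hw h
      exact Fin.ext (by omega))

/-- For `n` a sufficiently large multiple of 3, `R(P', F) > 2n`: there is a coloring of the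
triples of a `2n`-element set with no red `P'` and no blue Fano plane. -/
theorem Pprime_fano_ramsey_gt_two_n :
    ∃ n0 : ℕ, ∀ n : ℕ, n0 ≤ n → 3 ∣ n →
      ∃ red : Finset (Fin (2 * n)) → Prop,
        ¬ HasRedPprime red n ∧ ¬ HasBlueFano (fun e => ¬ red e) := by
  refine ⟨6, fun n hn ⟨m, hnm⟩ => ?_⟩
  subst hnm
  let γ : Fin (2 * (3 * m)) → Fin 3 := fun v => Fin.ofNat 3 v
  exact ⟨cyclicColoring γ,
    not_hasRedPprime_cyclicColoring γ (by omega) (card_filter_ofNat_le (by ring_nf; omega)),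
    not_hasBlueFano_cyclicColoring γ⟩
end

section
/- Let A, B be disjoint sets with |A| = |B| = m, m large, in a red-blue colored complete 3-uniform hypergraph, and suppose every vertex of A has degree at least 0.9m in the graph G(A,B) where a,a' ∈ A are adjacent iff at least 0.99m vertices b ∈ B make the triple a a' b red. Suppose additionally that all triples inside A are red. Then there is a red tight path on at least ⌊3(m-4)/2⌋ - 1 vertices alternating two vertices of A and one of B, i.e., of the form a_1 a_2 b_1 a_3 a_4 b_2 ... where consecutive triples along the sequence are red. -/
/-!
The graph `G(A, B)` satisfies Dirac's condition on `A`, so it has a Hamiltonian path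
`a 0, a 1, …` (by Pósa rotation: a path that cannot be extended at either end closes into a
cycle, and a vertex off that cycle has a neighbour on it).
Every three consecutive edges `a (2q) a (2q+1)`, `a (2q+1) a (2q+2)`, `a (2q+2) a (2q+3)` have
links in `B` of size `≥ 0.99m`, so their common link has size `≥ 0.97m`; choosing distinct
`b q` from these common links greedily gives the tight path `a 0, a 1, b 0, a 2, a 3, b 1, …`.
-/

open Finset

namespace SimpleGraph

variable {α : Type*} (G : SimpleGraph α) (A : Finset α)

/-- The path `p 0, p 1, …, p (n - 1)` of `G` on distinct vertices of `A`. -/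
structure IsPathIn_s17 (n : ℕ) (p : ℕ → α) : Prop where
  mem : ∀ i < n, p i ∈ A
  injOn : ∀ i < n, ∀ j < n, p i = p j → i = j
  adj : ∀ i, i + 1 < n → G.Adj (p i) (p (i + 1))

structure IsCycleIn (n : ℕ) (p : ℕ → α) : Prop extends G.IsPathIn_s17 A n p where
  adj_last_first : G.Adj (p (n - 1)) (p 0)

variable {G A} {n : ℕ} {p : ℕ → α}

namespace IsPathIn_s17

theorem of_le (h : G.IsPathIn_s17 A n p) {k : ℕ} (hk : k ≤ n) : G.IsPathIn_s17 A k p where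
  mem i hi := h.mem i (by omega)
  injOn i hi j hj := h.injOn i (by omega) j (by omega)
  adj i hi := h.adj i (by omega)

theorem reverse (h : G.IsPathIn_s17 A n p) : G.IsPathIn_s17 A n (fun i => p (n - 1 - i)) where
  mem i hi := h.mem _ (by omega)
  injOn i hi j hj hij := by have := h.injOn _ (by omega) _ (by omega) hij; omega
  adj i hi := by
    convert (h.adj (n - 1 - (i + 1)) (by omega)).symm using 2
    omega

theorem snoc (h : G.IsPathIn_s17 A n p) {x : α} (hx : x ∈ A) (hfresh : ∀ i < n, p i ≠ x)
    (hadj : G.Adj (p (n - 1)) x) : G.IsPathIn_s17 A (n + 1) (fun i => if i < n then p i else x) where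
  mem i hi := by
    split_ifs with hin
    exacts [h.mem i hin, hx]
  injOn i hi j hj hij := by
    split_ifs at hij with hin hjn hjn
    · exact h.injOn i hin j hjn hij
    · exact absurd hij (hfresh i hin)
    · exact absurd hij.symm (hfresh j hjn)
    · omega
  adj i hi := by
    by_cases hin : i + 1 < n
    · simpa [hin, show i < n by omega] using h.adj i hin
    · obtain rfl : i = n - 1 := by omega
      simpa [show n - 1 < n by omega, hin] using hadj

/-- Pósa's rotation: the chords `p 0 ~ p (i + 1)` and `p (n - 1) ~ p i` close
`p 0, …, p i, p (n - 1), …, p (i + 1)` into a cycle. -/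
theorem isCycleIn_of_crossing (h : G.IsPathIn_s17 A n p) {i : ℕ} (hi : i + 1 < n)
    (h₀ : G.Adj (p 0) (p (i + 1))) (h₁ : G.Adj (p (n - 1)) (p i)) :
    G.IsCycleIn A n (fun k => if k ≤ i then p k else p (n + i - k)) where
  mem k hk := by
    split_ifs
    exacts [h.mem k (by omega), h.mem _ (by omega)]
  injOn k hk l hl hkl := by
    split_ifs at hkl <;> have := h.injOn _ (by omega) _ (by omega) hkl <;> omega
  adj k hk := by
    split_ifs with hki hki' hki'
    · exact h.adj k (by omega)
    · obtain rfl : k = i := by omega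
      convert h₁.symm using 2
      omega
    · omega
    · convert (h.adj (n + i - (k + 1)) (by omega)).symm using 2
      omega
  adj_last_first := by
    simp only [show ¬ n - 1 ≤ i by omega, zero_le, if_true, if_false]
    convert h₀.symm using 2
    omega

theorem exists_adj_of_forall_ne [DecidableEq α] [DecidableRel G.Adj] (h : G.IsPathIn_s17 A n p)
    {x : α} (hx : x ∈ A) (hfresh : ∀ i < n, p i ≠ x)
    (hdeg : #A < n + 1 + #{a ∈ A | G.Adj x a}) : ∃ i < n, G.Adj x (p i) := by
  by_contra! hnone
  have hpath : insert x ((range n).image p) ⊆ A := by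
    simpa [insert_subset_iff, image_subset_iff, hx] using h.mem
  have hcard : #(insert x ((range n).image p)) = n + 1 := by
    rw [card_insert_of_notMem (by simpa using hfresh), card_image_of_injOn
      (fun i hi j hj => h.injOn i (by simpa using hi) j (by simpa using hj)), card_range]
  have hsub : {a ∈ A | G.Adj x a} ⊆ A \ insert x ((range n).image p) := by
    intro a ha
    simp only [mem_filter] at ha
    simp only [mem_sdiff, mem_insert, mem_image, mem_range, not_or, not_exists, not_and]
    exact ⟨ha.1, (G.ne_of_adj ha.2).symm, fun i hi hia => hnone i hi (hia ▸ ha.2)⟩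
  have := card_le_card hsub
  rw [card_sdiff_of_subset hpath, hcard] at this
  have := hcard ▸ card_le_card hpath
  omega

end IsPathIn_s17

theorem IsCycleIn.rotate (h : G.IsCycleIn A n p) {j : ℕ} (hj : j ≤ n) :
    G.IsPathIn_s17 A n (fun k => p (if k + j < n then k + j else k + j - n)) where
  mem k hk := by
    split_ifs
    exacts [h.mem _ (by omega), h.mem _ (by omega)]
  injOn k hk l hl hkl := by
    split_ifs at hkl <;> have := h.injOn _ (by omega) _ (by omega) hkl <;> omega
  adj k hk := by
    split_ifs with h₁ h₂ h₂
    · convert h.adj (k + j) (by omega) using 2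
      omega
    · convert h.adj_last_first using 2 <;> omega
    · omega
    · convert h.adj (k + j - n) (by omega) using 2
      omega

theorem card_filter_adj_le_card_filter_range [DecidableRel G.Adj] {v : α}
    (hv : ∀ a ∈ A, G.Adj v a → ∃ i < n, p i = a) :
    #{a ∈ A | G.Adj v a} ≤ #{i ∈ range n | G.Adj v (p i)} := by
  refine card_le_card_of_surjOn p fun a ha => ?_
  simp only [coe_filter] at ha
  obtain ⟨i, hi, rfl⟩ := hv a ha.1 ha.2
  exact ⟨i, by simpa using ⟨hi, ha.2⟩, rfl⟩

theorem exists_crossing [DecidableRel G.Adj]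
    (hcard : n < #{i ∈ range n | G.Adj (p 0) (p i)} + #{i ∈ range n | G.Adj (p (n - 1)) (p i)}) :
    ∃ i, i + 1 < n ∧ G.Adj (p 0) (p (i + 1)) ∧ G.Adj (p (n - 1)) (p i) := by
  classical
  set T₀ := {i ∈ range n | G.Adj (p 0) (p i)}
  set T₁ := {i ∈ range n | G.Adj (p (n - 1)) (p i)}
  have hT₀ : T₀ ⊆ Ico 1 n := by
    intro i hi
    simp only [T₀, mem_filter, mem_range] at hi
    have : i ≠ 0 := by rintro rfl; exact G.irrefl hi.2
    simp only [mem_Ico]; omega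
  have hT₁ : T₁.image (· + 1) ⊆ Ico 1 n := by
    intro i hi
    simp only [T₁, mem_image, mem_filter, mem_range] at hi
    obtain ⟨i, ⟨hi, hadj⟩, rfl⟩ := hi
    have : i ≠ n - 1 := by rintro rfl; exact G.irrefl hadj
    simp only [mem_Ico]; omega
  obtain ⟨k, hk⟩ := inter_nonempty_of_card_lt_card_add_card hT₀ hT₁ (by
    rw [card_image_of_injective _ (add_left_injective 1), Nat.card_Ico]; omega)
  simp only [T₀, T₁, mem_inter, mem_filter, mem_image, mem_range] at hk
  obtain ⟨⟨hk, hadj₀⟩, i, ⟨hi, hadj₁⟩, rfl⟩ := hk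
  exact ⟨i, hk, hadj₀, hadj₁⟩

variable [DecidableEq α] [DecidableRel G.Adj]

theorem IsPathIn_s17.exists_succ (hdirac : ∀ a ∈ A, #A ≤ 2 * #{a' ∈ A | G.Adj a a'})
    (h : G.IsPathIn_s17 A n p) (hn : 0 < n) (hnA : n < #A) : ∃ q, G.IsPathIn_s17 A (n + 1) q := by
  by_cases hlast : ∃ x ∈ A, G.Adj (p (n - 1)) x ∧ ∀ i < n, p i ≠ x
  · obtain ⟨x, hx, hadj, hfresh⟩ := hlast
    exact ⟨_, h.snoc hx hfresh hadj⟩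
  by_cases hfirst : ∃ x ∈ A, G.Adj (p 0) x ∧ ∀ i < n, p i ≠ x
  · obtain ⟨x, hx, hadj, hfresh⟩ := hfirst
    refine ⟨_, h.reverse.snoc hx (fun i hi => hfresh _ (by omega)) ?_⟩
    simpa using hadj
  push Not at hlast hfirst
  have h₀ := card_filter_adj_le_card_filter_range hfirst
  have h₁ := card_filter_adj_le_card_filter_range hlast
  have hd₀ := hdirac _ (h.mem 0 hn)
  have hd₁ := hdirac _ (h.mem (n - 1) (by omega))
  obtain ⟨i, hi, hc₀, hc₁⟩ := exists_crossing (G := G) (n := n) (p := p) (by omega)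
  have hc := h.isCycleIn_of_crossing hi hc₀ hc₁
  obtain ⟨x, hx, hxp⟩ := exists_mem_notMem_of_card_lt_card
    (s := (range n).image p) ((card_image_le.trans (card_range n).le).trans_lt hnA)
  have hfresh : ∀ i < n, p i ≠ x := fun i hi hpi => hxp (mem_image.2 ⟨i, mem_range.2 hi, hpi⟩)
  have hshort : #{i ∈ range n | G.Adj (p 0) (p i)} < n := by
    simpa using card_lt_card (filter_ssubset.2 ⟨0, mem_range.2 hn, G.irrefl⟩)
  -- `x` has `≥ |A|/2` neighbours, at most `|A| - n - 1` of them off the cycle, and `n > |A|/2`.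
  obtain ⟨j, hj, hxj⟩ := hc.exists_adj_of_forall_ne hx
    (fun k hk => by split_ifs <;> exact hfresh _ (by omega))
    (by have := hdirac x hx; omega)
  refine ⟨_, (hc.rotate (j := j + 1) hj).snoc hx
    (fun k hk => by split_ifs <;> exact hfresh _ (by omega)) ?_⟩
  have hend : (if n - 1 + (j + 1) < n then n - 1 + (j + 1) else n - 1 + (j + 1) - n) = j := by
    split_ifs <;> omega
  simpa only [hend] using hxj.symm

/-- Dirac's theorem, path version. -/
theorem exists_isPathIn_card (hA : A.Nonempty)
    (hdirac : ∀ a ∈ A, #A ≤ 2 * #{a' ∈ A | G.Adj a a'}) : ∃ p, G.IsPathIn_s17 A #A p := by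
  obtain ⟨a, ha⟩ := hA
  suffices ∀ n, 1 ≤ n → n ≤ #A → ∃ p, G.IsPathIn_s17 A n p from this _ (card_pos.2 ⟨a, ha⟩) le_rfl
  intro n hn
  induction n, hn using Nat.le_induction with
  | base => exact fun _ => ⟨fun _ => a, fun _ _ => ha, fun _ _ _ _ _ => by omega, by omega⟩
  | succ n hn ih =>
    intro hnA
    obtain ⟨p, hp⟩ := ih (by omega)
    exact hp.exists_succ hdirac (by omega) (by omega)

end SimpleGraph

theorem Finset.exists_injOn_mem_of_le_card {α : Type*} {S : ℕ → Finset α} {K : ℕ} (hK : 0 < K)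
    (hS : ∀ q < K, K ≤ #(S q)) :
    ∃ b : ℕ → α, (∀ q < K, b q ∈ S q) ∧ ∀ q < K, ∀ q' < K, b q = b q' → q = q' := by
  classical
  obtain ⟨f, hf, hfS⟩ := (all_card_le_biUnion_card_iff_exists_injective
    fun q : Fin K => S q).1 fun s => by
      rcases s.eq_empty_or_nonempty with rfl | ⟨q, hq⟩
      · simp
      · calc #s ≤ K := card_le_univ s |>.trans_eq (Fintype.card_fin K)
          _ ≤ #(S q) := hS q q.2
          _ ≤ #(s.biUnion fun q : Fin K => S q) :=
            card_le_card (subset_biUnion_of_mem (fun q : Fin K => S q) hq)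
  refine ⟨fun q => f ⟨q % K, Nat.mod_lt q hK⟩, fun q hq => ?_, fun q hq q' hq' hqq' => ?_⟩
  · simpa only [Nat.mod_eq_of_lt hq] using hfS ⟨q, hq⟩
  · simpa [Nat.mod_eq_of_lt, hq, hq'] using hf hqq'

theorem Finset.card_add_card_add_card_le {α : Type*} [DecidableEq α] {s₁ s₂ s₃ B : Finset α}
    (h₁ : s₁ ⊆ B) (h₂ : s₂ ⊆ B) (h₃ : s₃ ⊆ B) :
    #s₁ + #s₂ + #s₃ ≤ 2 * #B + #(s₁ ∩ s₂ ∩ s₃) := by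
  have e₁₂ := card_union_add_card_inter s₁ s₂
  have e₁₂₃ := card_union_add_card_inter (s₁ ∩ s₂) s₃
  have u₁₂ := card_le_card (union_subset h₁ h₂)
  have u₁₂₃ := card_le_card (union_subset (inter_subset_left.trans h₁ : s₁ ∩ s₂ ⊆ B) h₃)
  omega

namespace TightPath

variable {α : Type*}

/-- The sequence `a 0, a 1, b 0, a 2, a 3, b 1, …`. -/
def interleave (a b : ℕ → α) (i : ℕ) : α :=
  if i % 3 = 2 then b (i / 3) else a (2 * (i / 3) + i % 3)

section Interleave

variable {a b : ℕ → α} {K : ℕ}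

theorem interleave_three_mul (q : ℕ) : interleave a b (3 * q) = a (2 * q) := by
  rw [interleave, if_neg (by omega), show 3 * q / 3 = q by omega, show 3 * q % 3 = 0 by omega,
    add_zero]

theorem interleave_three_mul_add_one (q : ℕ) : interleave a b (3 * q + 1) = a (2 * q + 1) := by
  rw [interleave, if_neg (by omega), show (3 * q + 1) / 3 = q by omega,
    show (3 * q + 1) % 3 = 1 by omega]

theorem interleave_three_mul_add_two (q : ℕ) : interleave a b (3 * q + 2) = b q := by
  rw [interleave, if_pos (by omega), show (3 * q + 2) / 3 = q by omega]

theorem interleave_injOn (ha : ∀ i < 2 * K, ∀ j < 2 * K, a i = a j → i = j)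
    (hb : ∀ q < K, ∀ q' < K, b q = b q' → q = q') (hab : ∀ i < 2 * K, ∀ q < K, a i ≠ b q) :
    ∀ i < 3 * K, ∀ j < 3 * K, interleave a b i = interleave a b j → i = j := by
  intro i hi j hj hij
  unfold interleave at hij
  split_ifs at hij
  · have := hb _ (by omega) _ (by omega) hij; omega
  · exact absurd hij.symm (hab _ (by omega) _ (by omega))
  · exact absurd hij (hab _ (by omega) _ (by omega))
  · have := ha _ (by omega) _ (by omega) hij; omega

theorem interleave_mem {A B : Finset α} (ha : ∀ i < 2 * K, a i ∈ A) (hb : ∀ q < K, b q ∈ B) :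
    ∀ i < 3 * K, if i % 3 = 2 then interleave a b i ∈ B else interleave a b i ∈ A := by
  intro i hi
  unfold interleave
  split_ifs
  exacts [hb _ (by omega), ha _ (by omega)]

theorem interleave_red [DecidableEq α] {red : Finset α → Prop}
    (hred : ∀ q < K, red {a (2 * q), a (2 * q + 1), b q} ∧ red {a (2 * q + 1), b q, a (2 * q + 2)} ∧
      red {b q, a (2 * q + 2), a (2 * q + 3)}) :
    ∀ i, i + 2 < 3 * K →
      red {interleave a b i, interleave a b (i + 1), interleave a b (i + 2)} := by
  intro i hi
  obtain ⟨q, rfl | rfl | rfl⟩ : ∃ q, i = 3 * q ∨ i = 3 * q + 1 ∨ i = 3 * q + 2 := ⟨i / 3, by omega⟩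
  · rw [interleave_three_mul, interleave_three_mul_add_one, interleave_three_mul_add_two]
    exact (hred q (by omega)).1
  · rw [show 3 * q + 1 + 1 = 3 * q + 2 by ring, show 3 * q + 1 + 2 = 3 * (q + 1) by ring,
      interleave_three_mul_add_one, interleave_three_mul_add_two, interleave_three_mul,
      show 2 * (q + 1) = 2 * q + 2 by ring]
    exact (hred q (by omega)).2.1
  · rw [show 3 * q + 2 + 1 = 3 * (q + 1) by ring, show 3 * q + 2 + 2 = 3 * (q + 1) + 1 by ring,
      interleave_three_mul_add_two, interleave_three_mul, interleave_three_mul_add_one,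
      show 2 * (q + 1) = 2 * q + 2 by ring]
    exact (hred q (by omega)).2.2

end Interleave

section Link

variable [DecidableEq α] (red : Finset α → Prop) [DecidablePred red] (B : Finset α)

def link (x y : α) : Finset α := {b ∈ B | red {x, y, b}}

theorem link_comm (x y : α) : link red B x y = link red B y x := by
  simp only [link, insert_comm x y]

/-- The graph `G(A, B)` of the paper, with threshold `t` in place of `0.99m`. -/
def linkGraph (t : ℝ) : SimpleGraph α where
  Adj x y := x ≠ y ∧ t ≤ #(link red B x y)
  symm := ⟨fun x y h => ⟨h.1.symm, link_comm red B x y ▸ h.2⟩⟩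
  loopless := ⟨fun _ h => h.1 rfl⟩

noncomputable instance (t : ℝ) : DecidableRel (linkGraph red B t).Adj :=
  fun x y => inferInstanceAs (Decidable (x ≠ y ∧ _))

variable {red B}

theorem le_card_link_inter {t : ℝ} {x y z w : α} (h₁ : (linkGraph red B t).Adj x y)
    (h₂ : (linkGraph red B t).Adj y z) (h₃ : (linkGraph red B t).Adj z w) :
    3 * t - 2 * #B ≤ #(link red B x y ∩ link red B y z ∩ link red B z w) := by
  have := card_add_card_add_card_le (filter_subset _ B) (filter_subset _ B) (filter_subset _ B)
    (s₁ := link red B x y) (s₂ := link red B y z) (s₃ := link red B z w)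
  have hR : (#(link red B x y) + #(link red B y z) + #(link red B z w) : ℝ) ≤
      2 * #B + #(link red B x y ∩ link red B y z ∩ link red B z w) := by exact_mod_cast this
  linarith [h₁.2, h₂.2, h₃.2]

/-- The common link of the three `G`-edges around `b q` has at least `3t - 2|B| ≥ K` elements,
so distinct `b q` can be chosen from them. -/
theorem exists_interleave_of_isPathIn {A : Finset α} {t : ℝ} {K : ℕ} {a : ℕ → α}
    (hAB : Disjoint A B) (ha : (linkGraph red B t).IsPathIn_s17 A (2 * K + 2) a) (hK : 0 < K)
    (ht : K + 2 * #B ≤ 3 * t) :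
    ∃ b : ℕ → α, (∀ i < 3 * K, ∀ j < 3 * K, interleave a b i = interleave a b j → i = j) ∧
      (∀ i < 3 * K, if i % 3 = 2 then interleave a b i ∈ B else interleave a b i ∈ A) ∧
      ∀ i, i + 2 < 3 * K →
        red {interleave a b i, interleave a b (i + 1), interleave a b (i + 2)} := by
  set S : ℕ → Finset α := fun q => link red B (a (2 * q)) (a (2 * q + 1)) ∩
    link red B (a (2 * q + 1)) (a (2 * q + 2)) ∩ link red B (a (2 * q + 2)) (a (2 * q + 3))
  have hS : ∀ q < K, K ≤ #(S q) := fun q hq => by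
    have := le_card_link_inter (ha.adj (2 * q) (by omega)) (ha.adj (2 * q + 1) (by omega))
      (ha.adj (2 * q + 2) (by omega))
    exact_mod_cast (show (K : ℝ) ≤ #(S q) by linarith)
  obtain ⟨b, hbS, hbinj⟩ := exists_injOn_mem_of_le_card hK hS
  have hbB : ∀ q < K, b q ∈ B := fun q hq => filter_subset _ B (inter_subset_left.trans
    inter_subset_left (hbS q hq))
  have haA : ∀ i < 2 * K, a i ∈ A := fun i hi => ha.mem i (by omega)
  refine ⟨b, interleave_injOn (fun i hi j hj => ha.injOn i (by omega) j (by omega)) hbinj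
    (fun i hi q hq hab => disjoint_left.1 hAB (haA i hi) (hab ▸ hbB q hq)),
    interleave_mem haA hbB, interleave_red fun q hq => ?_⟩
  simp only [S, link, mem_inter, mem_filter] at hbS
  obtain ⟨⟨⟨-, h₀⟩, -, h₁⟩, -, h₂⟩ := hbS q hq
  refine ⟨h₀, ?_, ?_⟩
  · rwa [pair_comm]
  · rwa [insert_comm, pair_comm]

end Link

end TightPath

/-- If `A`, `B` are disjoint `m`-sets (`m` large), every triple inside `A` is red, and every
vertex of `A` has degree at least `0.9m` in the graph `G(A,B)` (where `a, a'` are adjacent iff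
at least `0.99m` vertices `b ∈ B` make `aa'b` red), then there is a red tight path on at least
`⌊3(m-4)/2⌋ - 1` vertices following the pattern `a₁ a₂ b₁ a₃ a₄ b₂ …`. -/
theorem red_tight_path_two_thirds_absorption :
    ∃ m0 : ℕ, ∀ m : ℕ, m0 ≤ m →
      ∀ (α : Type) [DecidableEq α] (red : Finset α → Prop) [DecidablePred red]
        (A B : Finset α), Disjoint A B → A.card = m → B.card = m →
        (∀ e : Finset α, e ⊆ A → e.card = 3 → red e) →
        (∀ a ∈ A, (0.9 : ℝ) * m ≤
          ((A.filter fun a' => a' ≠ a ∧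
            (0.99 : ℝ) * m ≤ ((B.filter fun b => red {a, a', b}).card : ℝ)).card : ℝ)) →
        ∃ (k : ℕ) (f : ℕ → α), 3 * (m - 4) / 2 - 1 ≤ k ∧
          (∀ i < k, ∀ j < k, f i = f j → i = j) ∧
          (∀ i < k, if i % 3 = 2 then f i ∈ B else f i ∈ A) ∧
          (∀ i, i + 2 < k → red ({f i, f (i + 1), f (i + 2)} : Finset α)) := by
  refine ⟨6, fun m hm α _ red _ A B hAB hA hB _ hdeg => ?_⟩
  set G := TightPath.linkGraph red B ((0.99 : ℝ) * m)
  have hdirac : ∀ a ∈ A, #A ≤ 2 * #{a' ∈ A | G.Adj a a'} := by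
    intro a ha
    have hG : {a' ∈ A | G.Adj a a'} =
        {a' ∈ A | a' ≠ a ∧ (0.99 : ℝ) * m ≤ #{b ∈ B | red {a, a', b}}} :=
      filter_congr fun a' _ => by simp only [G, TightPath.linkGraph, TightPath.link, ne_comm]
    have : (m : ℝ) ≤ 2 * #{a' ∈ A | G.Adj a a'} := by linarith [hG ▸ hdeg a ha]
    rw [hA]; exact_mod_cast this
  obtain ⟨a, ha⟩ := G.exists_isPathIn_card (card_pos.1 (by omega)) hdirac
  have hKm : (((m - 4) / 2 : ℕ) : ℝ) ≤ m / 2 := by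
    rw [le_div_iff₀ two_pos]; exact_mod_cast (by omega : (m - 4) / 2 * 2 ≤ m)
  obtain ⟨b, hb⟩ := TightPath.exists_interleave_of_isPathIn hAB
    (ha.of_le (by omega : 2 * ((m - 4) / 2) + 2 ≤ #A)) (by omega) (by rw [hB]; linarith)
  exact ⟨_, _, by omega, hb⟩
end

section
/- Let abc be a triple of distinct vertices in set A, and B a disjoint set of vertices, in a red-blue colored complete 3-uniform hypergraph, such that each of the blue link graphs G_a, G_b, G_c of a, b, c in B (where xy is an edge of G_v iff xyv is blue) satisfies e(G_v) ≥ (29/30)·C(|B|,2) for v ∈ {a,b,c}, and |B| is sufficiently large. If the triple abc is blue, then the coloring contains a blue copy of the Fano plane. -/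
open Finset

/-!
Call a pair `{u, u'} ⊆ B` bad if `v u u'` is red for some `v ∈ {a, b, c}`. At most a tenth of the
pairs are bad, and a fixed pair lies in a `6 / C(|B|, 2)` fraction of the `4`-subsets of `B`, so
some `4`-set `{w, x, y, z} ⊆ B` contains no bad pair. The three perfect matchings `wx | yz`,
`wy | xz`, `wz | xy` of this `4`-set, joined to `a`, `b`, `c` respectively, together with `abc`
are the seven lines of a blue Fano plane.
-/

namespace Finset

variable {α : Type*} [DecidableEq α]

theorem card_biUnion_filter_le_of_mul_le_card_filter_not {ι : Type*} {S : Finset ι}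
    {s : Finset α} {p : ι → α → Prop} [∀ i, DecidablePred (p i)] {r : ℝ}
    (h : ∀ i ∈ S, r * #s ≤ #(s.filter fun x => ¬ p i x)) :
    (#(S.biUnion fun i => s.filter (p i)) : ℝ) ≤ #S * ((1 - r) * #s) := by
  have hfilter : ∀ i ∈ S, (#(s.filter (p i)) : ℝ) ≤ (1 - r) * #s := fun i hi => by
    have hsplit : (#(s.filter (p i)) : ℝ) + #(s.filter fun x => ¬ p i x) = #s := by
      exact_mod_cast card_filter_add_card_filter_not (p i)
    linarith [h i hi]
  calc (#(S.biUnion fun i => s.filter (p i)) : ℝ) ≤ ∑ i ∈ S, (#(s.filter (p i)) : ℝ) :=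
        mod_cast card_biUnion_le
    _ ≤ #S * ((1 - r) * #s) := by simpa using sum_le_card_nsmul _ _ _ hfilter

theorem exists_mem_powersetCard_forall_not_subset {B : Finset α} {bad : Finset (Finset α)}
    {t k : ℕ} (hbad : bad ⊆ B.powersetCard t) (htk : t ≤ k) (hkB : k ≤ #B)
    (hsparse : #bad * k.choose t < (#B).choose t) :
    ∃ Q ∈ B.powersetCard k, ∀ s ∈ bad, ¬ s ⊆ Q := by
  by_contra! hcover
  have hcount : (#B).choose k ≤ #bad * (#B - t).choose (k - t) := calc
    (#B).choose k = #(B.powersetCard k) := (card_powersetCard k B).symm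
    _ ≤ #(bad.biUnion fun s => (B.powersetCard k).filter (s ⊆ ·)) := card_le_card fun Q hQ => by
        obtain ⟨s, hs, hsQ⟩ := hcover Q hQ
        exact mem_biUnion.2 ⟨s, hs, mem_filter.2 ⟨hQ, hsQ⟩⟩
    _ ≤ ∑ s ∈ bad, #((B.powersetCard k).filter (s ⊆ ·)) := card_biUnion_le
    _ = ∑ _s ∈ bad, (#B - t).choose (k - t) := sum_congr rfl fun s hs => by
        obtain ⟨hsB, hst⟩ := mem_powersetCard.1 (hbad hs)
        rw [card_filter_powersetCard_subset s B k hsB (hst ▸ htk), hst]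
    _ = #bad * (#B - t).choose (k - t) := by rw [sum_const, smul_eq_mul]
  have hpos : 0 < (#B - t).choose (k - t) := Nat.choose_pos (by omega)
  have := calc (#B).choose t * (#B - t).choose (k - t)
      = (#B).choose k * k.choose t := (Nat.choose_mul htk).symm
    _ ≤ #bad * (#B - t).choose (k - t) * k.choose t := Nat.mul_le_mul_right _ hcount
    _ = #bad * k.choose t * (#B - t).choose (k - t) := by ring
    _ < (#B).choose t * (#B - t).choose (k - t) := Nat.mul_lt_mul_of_pos_right hsparse hpos
  exact lt_irrefl _ this

end Finset

theorem hasBlueFano_of_blue_links {α : Type*} [DecidableEq α] {blue : Finset α → Prop}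
    {a b c : α} {Q : Finset α} (habc : [a, b, c].Nodup) (hQ : #Q = 4) (haQ : a ∉ Q) (hbQ : b ∉ Q)
    (hcQ : c ∉ Q) (hblue : blue {a, b, c})
    (hlinks : ∀ v ∈ ({a, b, c} : Finset α), ∀ p ⊆ Q, #p = 2 → blue (insert v p)) :
    HasBlueFano blue := by
  obtain ⟨w, x, y, z, hwx, hwy, hwz, hxy, hxz, hyz, rfl⟩ := card_eq_four.1 hQ
  refine ⟨![a, b, c, w, x, y, z], List.nodup_ofFn.1 ?_, ?_⟩
  · simp_all
  simp only [fanoLines, mem_insert, mem_singleton, forall_eq_or_imp, forall_eq, image_insert,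
    image_singleton]
  refine ⟨hblue, ?_, ?_, ?_, ?_, ?_, ?_⟩ <;>
    refine hlinks _ (by simp) _ (by intro t; simp; tauto) (card_pair ‹_›)

/-- If `a, b, c` are distinct vertices outside a sufficiently large set `B`, each of their blue
link graphs in `B` has at least `(29/30)·C(|B|,2)` edges, and the triple `abc` is blue, then
the coloring contains a blue copy of the Fano plane. -/
theorem blue_fano_from_dense_blue_links :
    ∃ n0 : ℕ, ∀ (α : Type) [DecidableEq α] (red : Finset α → Prop) [DecidablePred red]
      (a b c : α) (B : Finset α),
      [a, b, c].Nodup → a ∉ B → b ∉ B → c ∉ B → n0 ≤ B.card →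
      (∀ v ∈ ({a, b, c} : Finset α),
        (29 / 30 : ℝ) * (B.card.choose 2 : ℝ) ≤
          (((B.powersetCard 2).filter fun p => ¬ red (insert v p)).card : ℝ)) →
      ¬ red {a, b, c} →
      HasBlueFano (fun e => ¬ red e) := by
  refine ⟨4, fun α _ red _ a b c B hnodup haB hbB hcB hB hlinks habc => ?_⟩
  set bad := ({a, b, c} : Finset α).biUnion fun v =>
    (B.powersetCard 2).filter fun p => red (insert v p)
  have hsparse : #bad * Nat.choose 4 2 < (#B).choose 2 := by
    have hpairs : (0 : ℝ) < (#B).choose 2 := by exact_mod_cast Nat.choose_pos (by omega)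
    have hbad := card_biUnion_filter_le_of_mul_le_card_filter_not (s := B.powersetCard 2)
      (p := fun v p => red (insert v p)) fun v hv => by rw [card_powersetCard]; exact hlinks v hv
    rw [card_powersetCard] at hbad
    have : (#bad * Nat.choose 4 2 : ℝ) < (#B).choose 2 := calc
      (#bad * Nat.choose 4 2 : ℝ)
          ≤ #({a, b, c} : Finset α) * ((1 - 29 / 30) * (#B).choose 2) * 6 := by
        rw [show Nat.choose 4 2 = 6 from rfl, Nat.cast_ofNat]; gcongr
      _ ≤ 3 * ((1 - 29 / 30) * (#B).choose 2) * 6 := by gcongr; exact_mod_cast card_le_three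
      _ < (#B).choose 2 := by linarith
    exact_mod_cast this
  obtain ⟨Q, hQ, hQbad⟩ := exists_mem_powersetCard_forall_not_subset
    (biUnion_subset.2 fun _ _ => filter_subset _ _) (by norm_num) hB hsparse
  obtain ⟨hQB, hQcard⟩ := mem_powersetCard.1 hQ
  refine hasBlueFano_of_blue_links hnodup hQcard (fun h => haB (hQB h)) (fun h => hbB (hQB h))
    (fun h => hcB (hQB h)) habc fun v hv p hpQ hp hred => hQbad p ?_ hpQ
  exact mem_biUnion.2 ⟨v, hv, mem_filter.2 ⟨mem_powersetCard.2 ⟨hpQ.trans hQB, hp⟩, hred⟩⟩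
end
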